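/- Let G be a finite loopless multigraph with maximum degree Δ(G) ≥ 3, and let F̄ be any set of pairwise vertex-disjoint cycles of G. Then there exists a maximum Δ(G)-edge-colorable subgraph H of G such that every edge of every cycle in F̄ belongs to H. -/

import Mathlib

/-- A finite undirected multigraph without loops: `inc e` is the (unordered)
pair of endpoints of the edge `e`. -/
structure Multigraph (V : Type) (E : Type) where
  inc : E → Sym2 V
  loopless : ∀ e : E, ¬ (inc e).IsDiag

namespace Multigraph

variable {V E : Type}

/-- The degree of the vertex `v` in the subgraph with edge set `S`. -/
noncomputable def degOn (G : Multigraph V E) (S : Set E) (v : V) : ℕ :=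
  {e | e ∈ S ∧ v ∈ G.inc e}.ncard

/-- The degree of the vertex `v` in `G`. -/
noncomputable def deg (G : Multigraph V E) (v : V) : ℕ :=
  G.degOn Set.univ v

/-- The maximum degree `Δ(G)` of `G`. -/
noncomputable def maxDeg (G : Multigraph V E) [Fintype V] : ℕ :=
  Finset.univ.sup G.deg

/-- The maximum degree of the subgraph of `G` with edge set `S`. -/
noncomputable def maxDegOn (G : Multigraph V E) [Fintype V] (S : Set E) : ℕ :=
  Finset.univ.sup (G.degOn S)

/-- The minimum degree of the subgraph of `G` with edge set `S`. -/
noncomputable def minDegOn (G : Multigraph V E) [Fintype V] [Nonempty V] (S : Set E) : ℕ :=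
  Finset.univ.inf' Finset.univ_nonempty (G.degOn S)

/-- `c` is a proper edge coloring of the subgraph of `G` with edge set `S`,
using the `n` colors `0, …, n-1`: distinct edges of `S` sharing a vertex get
distinct colors. -/
def ProperOn (G : Multigraph V E) (S : Set E) (c : E → ℕ) (n : ℕ) : Prop :=
  (∀ e ∈ S, c e < n) ∧
    ∀ e ∈ S, ∀ f ∈ S, e ≠ f → (∃ v : V, v ∈ G.inc e ∧ v ∈ G.inc f) → c e ≠ c f

/-- The subgraph with edge set `S` is properly `n`-edge-colorable. -/
def ColorableOn (G : Multigraph V E) (S : Set E) (n : ℕ) : Prop :=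
  ∃ c : E → ℕ, G.ProperOn S c n

/-- The chromatic index of the subgraph of `G` with edge set `S`. -/
noncomputable def chromIndexOn (G : Multigraph V E) (S : Set E) : ℕ :=
  sInf {n | G.ColorableOn S n}

/-- The chromatic index `χ'(G)`. -/
noncomputable def chromIndex (G : Multigraph V E) : ℕ :=
  G.chromIndexOn Set.univ

/-- `S` is (the edge set of) a maximum `Δ(G)`-edge-colorable subgraph of `G`:
it is `Δ(G)`-edge-colorable and has as many edges as possible. -/
def IsMaxColorable (G : Multigraph V E) [Fintype V] (S : Set E) : Prop :=
  G.ColorableOn S G.maxDeg ∧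
    ∀ T : Set E, G.ColorableOn T G.maxDeg → T.ncard ≤ S.ncard

/-- The color `α` is missing at the vertex `v` (w.r.t. the coloring `c` of the
subgraph with edge set `S`): no colored edge incident with `v` has color `α`. -/
def MissingAt (G : Multigraph V E) (S : Set E) (c : E → ℕ) (α : ℕ) (v : V) : Prop :=
  ∀ e ∈ S, v ∈ G.inc e → c e ≠ α

/-- The maximum multiplicity `μ(G)` of an edge of `G`. -/
noncomputable def maxMult (G : Multigraph V E) [Fintype V] : ℕ :=
  Finset.univ.sup fun p : V × V => {e | G.inc e = s(p.1, p.2)}.ncard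

/-- The underlying simple graph of `G`. -/
def toSimple (G : Multigraph V E) : SimpleGraph V where
  Adj u v := u ≠ v ∧ ∃ e : E, G.inc e = s(u, v)
  symm := by
    constructor; intro u v h
    exact ⟨Ne.symm h.1, by obtain ⟨e, he⟩ := h.2; exact ⟨e, by rw [he, Sym2.eq_swap]⟩⟩
  loopless := by constructor; intro v h; exact h.1 rfl

/-- Walks in a multigraph. -/
inductive Walk (G : Multigraph V E) : V → V → Type
  | nil (v : V) : Walk G v v
  | cons {u v w : V} (e : E) (h : G.inc e = s(u, v)) (p : Walk G v w) : Walk G u w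

namespace Walk

/-- The list of edges of a walk. -/
def edges {G : Multigraph V E} : {u v : V} → G.Walk u v → List E
  | _, _, .nil _ => []
  | _, _, .cons e _ p => e :: edges p

/-- The list of vertices visited by a walk. -/
def support {G : Multigraph V E} : {u v : V} → G.Walk u v → List V
  | _, v, .nil _ => [v]
  | u, _, .cons _ _ p => u :: support p

/-- A walk is a path if it visits no vertex twice. -/
def IsPath {G : Multigraph V E} {u v : V} (p : G.Walk u v) : Prop :=
  p.support.Nodup

/-- A closed walk is a cycle if it is nonempty, repeats no edge, and visits no
vertex twice (except for the common start/end). -/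
def IsCycle {G : Multigraph V E} {v : V} (p : G.Walk v v) : Prop :=
  p.edges ≠ [] ∧ p.edges.Nodup ∧ p.support.tail.Nodup

end Walk

/-- The list of edges `l` is alternately colored `α, β, α, β, …` by `c`. -/
def AltColors (c : E → ℕ) (α β : ℕ) (l : List E) : Prop :=
  ∀ i : Fin l.length, c (l.get i) = if (i : ℕ) % 2 = 0 then α else β

/-- The `α`-`β`-alternating walk `p` (w.r.t. the coloring `c` of the subgraph
with edge set `S`) is maximal: it cannot be extended at its endpoint. -/
def MaximalAlt (G : Multigraph V E) (S : Set E) (c : E → ℕ) (α β : ℕ)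
    {v w : V} (p : G.Walk v w) : Prop :=
  ∀ f ∈ S, f ∉ p.edges → w ∈ G.inc f →
    c f ≠ (if p.edges.length % 2 = 0 then α else β)

/-- `C` is the edge set of the odd cycle `C^e_{α,β}`: the uncolored edge
`e = (u,v)` (with `α` missing at `u` and `β` missing at `v`) together with the
`α`-`β`-alternating path joining `v` to `u` inside the colored subgraph `S`. -/
def IsKempeCycle (G : Multigraph V E) [Fintype V] (S : Set E) (c : E → ℕ)
    (e : E) (α β : ℕ) (C : Set E) : Prop :=
  α < G.maxDeg ∧ β < G.maxDeg ∧
    ∃ (u v : V) (p : G.Walk v u),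
      G.inc e = s(u, v) ∧ G.MissingAt S c α u ∧ G.MissingAt S c β v ∧
      p.IsPath ∧ (∀ f ∈ p.edges, f ∈ S) ∧ AltColors c α β p.edges ∧
      C = insert e {f | f ∈ p.edges}

end Multigraph


set_option maxHeartbeats 1000000

section DisjointCyclesDev

open Classical

namespace Multigraph

variable {V E : Type} [Fintype V] [Fintype E] {G : Multigraph V E}

/-! ### Basic helpers -/

lemma ne_of_inc {e : E} {a b : V} (h : G.inc e = s(a, b)) : a ≠ b := by
  intro hab
  exact G.loopless e (by rw [h, hab]; exact Sym2.mk_isDiag_iff.2 rfl)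

lemma ProperOn.mono {S T : Set E} {c : E → ℕ} {n : ℕ} (h : G.ProperOn S c n) (hTS : T ⊆ S) :
    G.ProperOn T c n :=
  ⟨fun e he => h.1 e (hTS he), fun e he f hf => h.2 e (hTS he) f (hTS hf)⟩

/-- The set of edges of `S` incident with `v`. -/
def eAt (G : Multigraph V E) (S : Set E) (v : V) : Set E := {e | e ∈ S ∧ v ∈ G.inc e}

lemma degOn_def (S : Set E) (v : V) : G.degOn S v = (G.eAt S v).ncard := rfl

lemma eAt_mono {S T : Set E} (h : S ⊆ T) (v : V) : G.eAt S v ⊆ G.eAt T v :=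
  fun _ hx => ⟨h hx.1, hx.2⟩

/-- In a proper coloring, the coloring is injective on the edges at a vertex. -/
lemma injOn_eAt {S : Set E} {c : E → ℕ} {n : ℕ} (hc : G.ProperOn S c n) (v : V) :
    Set.InjOn c (G.eAt S v) := by
  intro x hx y hy hxy
  by_contra hne
  exact hc.2 x hx.1 y hy.1 hne ⟨v, hx.2, hy.2⟩ hxy

/-- If the degree of `v` in `S` is `< n`, some color is missing at `v`. -/
lemma exists_missing {S : Set E} {c : E → ℕ} {n : ℕ} (hc : G.ProperOn S c n) {v : V}
    (hd : G.degOn S v < n) : ∃ δ, δ < n ∧ G.MissingAt S c δ v := by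
  by_contra hcon
  push_neg at hcon
  have hsub : (↑(Finset.range n) : Set ℕ) ⊆ c '' G.eAt S v := by
    intro δ hδ
    simp only [Finset.coe_range, Set.mem_Iio] at hδ
    have h1 := hcon δ hδ
    rw [MissingAt] at h1
    push_neg at h1
    obtain ⟨x, hxS, hxv, hcx⟩ := h1
    exact ⟨x, ⟨hxS, hxv⟩, hcx⟩
  have h1 : n ≤ (c '' G.eAt S v).ncard := by
    calc n = (↑(Finset.range n) : Set ℕ).ncard := by
            rw [Set.ncard_coe_finset, Finset.card_range]
      _ ≤ _ := Set.ncard_le_ncard hsub (Set.toFinite _)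
  have h2 : (c '' G.eAt S v).ncard = G.degOn S v := Set.ncard_image_of_injOn (injOn_eAt hc v)
  omega

/-- If exactly one color is missing at `v`, then the degree of `v` is `n - 1`. -/
lemma degOn_of_unique_missing {S : Set E} {c : E → ℕ} {n : ℕ} (hc : G.ProperOn S c n) {v : V}
    {δ : ℕ} (hδ : δ < n) (hmiss : G.MissingAt S c δ v)
    (huniq : ∀ δ', δ' < n → G.MissingAt S c δ' v → δ' = δ) :
    G.degOn S v + 1 = n := by
  have himg : c '' G.eAt S v = ↑(Finset.range n) \ {δ} := by
    ext γ
    constructor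
    · rintro ⟨x, hx, rfl⟩
      refine ⟨by simpa using hc.1 x hx.1, ?_⟩
      simp only [Set.mem_singleton_iff]
      exact hmiss x hx.1 hx.2
    · rintro ⟨hγn, hγδ⟩
      simp only [Finset.coe_range, Set.mem_Iio] at hγn
      simp only [Set.mem_singleton_iff] at hγδ
      by_contra hγ
      refine hγδ (huniq γ hγn ?_)
      intro x hxS hxv hcx
      exact hγ ⟨x, ⟨hxS, hxv⟩, hcx⟩
  have h2 : (c '' G.eAt S v).ncard = G.degOn S v := Set.ncard_image_of_injOn (injOn_eAt hc v)
  have h3 : ((↑(Finset.range n) : Set ℕ) \ {δ}).ncard = n - 1 := by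
    rw [Set.ncard_diff_singleton_of_mem (by simpa using hδ),
      Set.ncard_coe_finset, Finset.card_range]
  rw [himg, h3] at h2
  omega

/-- Extending a proper coloring to a new edge whose endpoints both miss δ. -/
lemma proper_insert {S : Set E} {c : E → ℕ} {n : ℕ} (hc : G.ProperOn S c n)
    {e : E} {u v : V} {δ : ℕ} (he : e ∉ S) (hinc : G.inc e = s(u, v)) (hδ : δ < n)
    (hu : G.MissingAt S c δ u) (hv : G.MissingAt S c δ v) :
    G.ProperOn (insert e S) (Function.update c e δ) n := by
  constructor
  · rintro x (rfl | hx)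
    · simpa using hδ
    · rw [Function.update_of_ne (by rintro rfl; exact he hx)]
      exact hc.1 x hx
  · rintro x (rfl | hx) y (rfl | hy) hxy hshare
    · exact absurd rfl hxy
    · rw [Function.update_self, Function.update_of_ne (by rintro rfl; exact he hy)]
      obtain ⟨w, hwx, hwy⟩ := hshare
      rw [hinc, Sym2.mem_iff] at hwx
      rcases hwx with rfl | rfl
      · exact fun h => hu y hy hwy h.symm
      · exact fun h => hv y hy hwy h.symm
    · rw [Function.update_self, Function.update_of_ne (by rintro rfl; exact he hx)]
      obtain ⟨w, hwx, hwy⟩ := hshare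
      rw [hinc, Sym2.mem_iff] at hwy
      rcases hwy with rfl | rfl
      · exact hu x hx hwx
      · exact hv x hx hwx
    · rw [Function.update_of_ne (by rintro rfl; exact he hx),
        Function.update_of_ne (by rintro rfl; exact he hy)]
      exact hc.2 x hx y hy hxy hshare

/-! ### Lex-maximal colorable subsets -/

/-- `S` is a lexicographically maximal `n`-colorable subset of `A` (first by size,
then by size of intersection with `F`). -/
def IsLexMax (G : Multigraph V E) (A F : Set E) (n : ℕ) (S : Set E) : Prop :=
  S ⊆ A ∧ G.ColorableOn S n ∧
    ∀ T : Set E, T ⊆ A → G.ColorableOn T n →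
      T.ncard ≤ S.ncard ∧ (S.ncard ≤ T.ncard → (T ∩ F).ncard ≤ (S ∩ F).ncard)

lemma colorableOn_empty (n : ℕ) : G.ColorableOn (∅ : Set E) n :=
  ⟨fun _ => 0, fun x hx => absurd hx (Set.notMem_empty x), fun x hx => absurd hx (Set.notMem_empty x)⟩

lemma exists_lexMax (A F : Set E) (n : ℕ) : ∃ S, G.IsLexMax A F n S := by
  classical
  set K := Fintype.card E with hK
  set Φ : Set E → ℕ := fun T => (K + 1) * T.ncard + (T ∩ F).ncard with hΦ
  set vals : Set ℕ := {k | ∃ T : Set E, T ⊆ A ∧ G.ColorableOn T n ∧ Φ T = k} with hvals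
  have hne : vals.Nonempty := ⟨Φ ∅, ∅, Set.empty_subset A, colorableOn_empty n, rfl⟩
  have hbdd : BddAbove vals := by
    refine ⟨(K + 1) * K + K, ?_⟩
    rintro k ⟨T, _, _, rfl⟩
    have h1 : T.ncard ≤ K := by
      simpa [Set.ncard_univ] using Set.ncard_le_ncard (Set.subset_univ T) (Set.toFinite _)
    have h2 : (T ∩ F).ncard ≤ K := by
      simpa [Set.ncard_univ] using Set.ncard_le_ncard (Set.subset_univ (T ∩ F)) (Set.toFinite _)
    have := Nat.mul_le_mul_left (K + 1) h1
    simp only [hΦ]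
    omega
  obtain ⟨S, hSA, hScol, hSval⟩ := Nat.sSup_mem hne hbdd
  refine ⟨S, hSA, hScol, fun T hTA hTcol => ?_⟩
  have hT : Φ T ≤ Φ S := by
    rw [hSval]
    exact le_csSup hbdd ⟨T, hTA, hTcol, rfl⟩
  have hTF : (T ∩ F).ncard ≤ K := by
    simpa [Set.ncard_univ] using Set.ncard_le_ncard (Set.subset_univ (T ∩ F)) (Set.toFinite _)
  have hSF : (S ∩ F).ncard ≤ K := by
    simpa [Set.ncard_univ] using Set.ncard_le_ncard (Set.subset_univ (S ∩ F)) (Set.toFinite _)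
  simp only [hΦ] at hT
  constructor
  · nlinarith [hT, hTF, hSF]
  · intro hST
    nlinarith [hT, hTF, hSF, hST]


/-! ### Pinning lemmas -/

lemma mem_pair_of_ncard_le_two {M : Set E} {p q x : E} (hp : p ∈ M) (hq : q ∈ M)
    (hpq : p ≠ q) (hM : M.ncard ≤ 2) (hx : x ∈ M) : x = p ∨ x = q := by
  by_contra hcon
  push_neg at hcon
  have hsub : ({x, p, q} : Set E) ⊆ M := by
    intro y hy
    rcases hy with rfl | rfl | rfl
    · exact hx
    · exact hp
    · exact hq
  have h3 : ({x, p, q} : Set E).ncard = 3 := by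
    rw [Set.ncard_eq_three]
    exact ⟨x, p, q, hcon.1, hcon.2, hpq, rfl⟩
  have := Set.ncard_le_ncard hsub (Set.toFinite _)
  omega

lemma swap_ncard {S : Set E} {e h : E} (he : e ∉ S) (hh : h ∈ S) :
    (insert e (S \ {h})).ncard = S.ncard := by
  have h1 : e ∉ S \ {h} := fun hx => he hx.1
  rw [Set.ncard_insert_of_notMem h1 (Set.toFinite _),
    Set.ncard_diff_singleton_of_mem hh]
  have : 1 ≤ S.ncard := by
    have : ({h} : Set E) ⊆ S := Set.singleton_subset_iff.2 hh
    simpa using Set.ncard_le_ncard this (Set.toFinite _)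
  omega

/-- If some color `δ` is missing at both endpoints of an uncolored edge, the lex-maximal
subset can be enlarged: contradiction. -/
lemma no_common_missing {A F S : Set E} {n : ℕ} (hlex : G.IsLexMax A F n S)
    {c : E → ℕ} (hc : G.ProperOn S c n) {e : E} {u v : V} (heA : e ∈ A) (heS : e ∉ S)
    (hinc : G.inc e = s(u, v)) {δ : ℕ} (hδ : δ < n)
    (hu : G.MissingAt S c δ u) (hv : G.MissingAt S c δ v) : False := by
  have hcol : G.ColorableOn (insert e S) n :=
    ⟨_, proper_insert hc heS hinc hδ hu hv⟩
  have hsub : insert e S ⊆ A := Set.insert_subset heA hlex.1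
  have := (hlex.2.2 (insert e S) hsub hcol).1
  rw [Set.ncard_insert_of_notMem heS (Set.toFinite _)] at this
  omega

/-- Pinning: if `δ` is missing at `a`, then `b` has a `δ`-colored edge, which moreover
belongs to `F`. -/
lemma pin {A F S : Set E} {n : ℕ} (hlex : G.IsLexMax A F n S)
    (hFA : F ⊆ A) {c : E → ℕ} (hc : G.ProperOn S c n) {e : E} {a b : V}
    (heF : e ∈ F) (heS : e ∉ S) (hinc : G.inc e = s(a, b)) {δ : ℕ} (hδ : δ < n)
    (hmiss : G.MissingAt S c δ a) :
    ∃ h, h ∈ S ∧ h ∈ F ∧ b ∈ G.inc h ∧ c h = δ := by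
  -- first, b must have a δ-colored edge
  by_cases hb : G.MissingAt S c δ b
  · exact absurd (no_common_missing hlex hc (hFA heF) heS hinc hδ hmiss hb) id
  · rw [MissingAt] at hb
    push_neg at hb
    obtain ⟨h, hhS, hhb, hch⟩ := hb
    refine ⟨h, hhS, ?_, hhb, hch⟩
    -- h ∈ F, else exchange improves the lex order
    by_contra hhF
    have hhe : h ≠ e := fun hh => heS (hh ▸ hhS)
    -- δ is missing at b in S \ {h}
    have hmb : G.MissingAt (S \ {h}) c δ b := by
      intro x hx hxb hcx
      refine hx.2 ?_
      have : x = h := by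
        by_contra hxh
        exact hc.2 x hx.1 h hhS hxh ⟨b, hxb, hhb⟩ (hcx.trans hch.symm)
      simp [this]
    have hma : G.MissingAt (S \ {h}) c δ a := fun x hx => hmiss x hx.1
    have hprop := proper_insert (hc.mono Set.diff_subset) (fun hx => heS hx.1) hinc hδ hma hmb
    have hsub : insert e (S \ {h}) ⊆ A :=
      Set.insert_subset (hFA heF) (Set.diff_subset.trans hlex.1)
    have hcard := swap_ncard heS hhS
    have hlexT := hlex.2.2 (insert e (S \ {h})) hsub ⟨_, hprop⟩
    have hFcard := hlexT.2 (le_of_eq hcard.symm)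
    -- but the F-intersection grew
    have hint : (insert e (S \ {h})) ∩ F = insert e (S ∩ F) := by
      ext x
      simp only [Set.mem_inter_iff, Set.mem_insert_iff, Set.mem_diff, Set.mem_singleton_iff]
      constructor
      · rintro ⟨rfl | ⟨hxS, _⟩, hxF⟩
        · exact Or.inl rfl
        · exact Or.inr ⟨hxS, hxF⟩
      · rintro (rfl | ⟨hxS, hxF⟩)
        · exact ⟨Or.inl rfl, heF⟩
        · exact ⟨Or.inr ⟨hxS, fun hxh => hhF (hxh ▸ hxF)⟩, hxF⟩
    rw [hint, Set.ncard_insert_of_notMem (fun hx => heS hx.1) (Set.toFinite _)] at hFcard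
    omega

/-- Uniqueness of the missing color at an endpoint of an uncolored `F`-edge
(when `F` has maximum degree two). -/
lemma pin_unique {A F S : Set E} {n : ℕ} (hlex : G.IsLexMax A F n S)
    (hFA : F ⊆ A) (hFdeg : ∀ w : V, {f ∈ F | w ∈ G.inc f}.ncard ≤ 2)
    {c : E → ℕ} (hc : G.ProperOn S c n) {e : E} {a b : V}
    (heF : e ∈ F) (heS : e ∉ S) (hinc : G.inc e = s(a, b)) {δ δ' : ℕ}
    (hδ : δ < n) (hδ' : δ' < n)
    (hm : G.MissingAt S c δ a) (hm' : G.MissingAt S c δ' a) : δ = δ' := by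
  obtain ⟨h, hhS, hhF, hhb, hch⟩ := pin hlex hFA hc heF heS hinc hδ hm
  obtain ⟨h', hhS', hhF', hhb', hch'⟩ := pin hlex hFA hc heF heS hinc hδ' hm'
  have heb : b ∈ G.inc e := by rw [hinc]; exact Sym2.mem_mk_right a b
  have hhe : h ≠ e := fun hh => heS (hh ▸ hhS)
  have hhe' : h' ≠ e := fun hh => heS (hh ▸ hhS')
  have hmem : h' ∈ {f ∈ F | b ∈ G.inc f} := ⟨hhF', hhb'⟩
  have hEq : h' = e ∨ h' = h := by
    exact mem_pair_of_ncard_le_two (M := {f ∈ F | b ∈ G.inc f}) (p := e) (q := h)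
      ⟨heF, heb⟩ ⟨hhF, hhb⟩ (fun hh => hhe hh.symm) (hFdeg b) hmem
  rcases hEq with rfl | rfl
  · exact absurd rfl hhe'
  · rw [← hch, hch']

/-- The rotation step: replace the pinned edge `h` by `e`; the resulting set is
again lex-maximal, with the updated coloring. -/
lemma rotate {A F S : Set E} {n : ℕ} (hlex : G.IsLexMax A F n S)
    (hFA : F ⊆ A) {c : E → ℕ} (hc : G.ProperOn S c n) {e : E} {a b : V}
    (heF : e ∈ F) (heS : e ∉ S) (hinc : G.inc e = s(a, b)) {δ : ℕ} (hδ : δ < n)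
    (hmiss : G.MissingAt S c δ a) {h : E} (hhS : h ∈ S) (hhF : h ∈ F) (hhb : b ∈ G.inc h)
    (hch : c h = δ) :
    G.IsLexMax A F n (insert e (S \ {h})) ∧
      G.ProperOn (insert e (S \ {h})) (Function.update c e δ) n := by
  have hmb : G.MissingAt (S \ {h}) c δ b := by
    intro x hx hxb hcx
    refine hx.2 ?_
    have : x = h := by
      by_contra hxh
      exact hc.2 x hx.1 h hhS hxh ⟨b, hxb, hhb⟩ (hcx.trans hch.symm)
    simp [this]
  have hma : G.MissingAt (S \ {h}) c δ a := fun x hx => hmiss x hx.1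
  have hprop := proper_insert (hc.mono Set.diff_subset) (fun hx => heS hx.1) hinc hδ hma hmb
  have hsub : insert e (S \ {h}) ⊆ A :=
    Set.insert_subset (hFA heF) (Set.diff_subset.trans hlex.1)
  have hcard := swap_ncard heS hhS
  refine ⟨⟨hsub, ⟨_, hprop⟩, fun T hTA hTcol => ?_⟩, hprop⟩
  have h1 := hlex.2.2 T hTA hTcol
  constructor
  · omega
  · intro hT
    have hint : (insert e (S \ {h})) ∩ F = insert e ((S ∩ F) \ {h}) := by
      ext x
      simp only [Set.mem_inter_iff, Set.mem_insert_iff, Set.mem_diff, Set.mem_singleton_iff]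
      constructor
      · rintro ⟨rfl | ⟨hxS, hxh⟩, hxF⟩
        · exact Or.inl rfl
        · exact Or.inr ⟨⟨hxS, hxF⟩, hxh⟩
      · rintro (rfl | ⟨⟨hxS, hxF⟩, hxh⟩)
        · exact ⟨Or.inl rfl, heF⟩
        · exact ⟨Or.inr ⟨hxS, hxh⟩, hxF⟩
    have h2 := h1.2 (by omega)
    have h3 : (insert e ((S ∩ F) \ {h})).ncard = (S ∩ F).ncard :=
      swap_ncard (fun hx => heS hx.1) ⟨hhS, hhF⟩
    rw [hint, h3]
    exact h2


/-! ### Kempe components and swaps -/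

lemma sym2_eq_of_ne_mem {z : Sym2 V} {u v : V} (hu : u ∈ z) (hv : v ∈ z) (huv : u ≠ v) :
    z = s(u, v) := by
  obtain ⟨⟨a, b⟩, rfl⟩ := z.exists_rep
  rw [Sym2.mem_iff] at hu hv
  rcases hu with rfl | rfl <;> rcases hv with rfl | rfl
  · exact absurd rfl huv
  · rfl
  · exact Sym2.eq_swap
  · exact absurd rfl huv.symm

/-- The "line graph" of the `d₁`/`d₂`-colored edges inside `Γ`. -/
def lineG (G : Multigraph V E) (Γ : Set E) (c : E → ℕ) (d₁ d₂ : ℕ) : SimpleGraph E where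
  Adj x y := x ≠ y ∧ x ∈ Γ ∧ y ∈ Γ ∧ (c x = d₁ ∨ c x = d₂) ∧ (c y = d₁ ∨ c y = d₂) ∧
    ∃ w : V, w ∈ G.inc x ∧ w ∈ G.inc y
  symm := by
    constructor
    rintro x y ⟨h1, h2, h3, h4, h5, w, hw1, hw2⟩
    exact ⟨h1.symm, h3, h2, h5, h4, w, hw2, hw1⟩
  loopless := by constructor; intro x h; exact h.1 rfl

/-- Swapping the colors `d₁`, `d₂` on the connected component of `g`. -/
noncomputable def swapC (G : Multigraph V E) (Γ : Set E) (c : E → ℕ) (d₁ d₂ : ℕ) (g : E) :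
    E → ℕ :=
  fun x => if (G.lineG Γ c d₁ d₂).Reachable g x then (if c x = d₁ then d₂ else d₁) else c x

lemma walk_end_mem_D {Γ : Set E} {c : E → ℕ} {d₁ d₂ : ℕ} :
    ∀ {a b : E}, (G.lineG Γ c d₁ d₂).Walk a b → (a ∈ Γ ∧ (c a = d₁ ∨ c a = d₂)) →
      (b ∈ Γ ∧ (c b = d₁ ∨ c b = d₂))
  | _, _, SimpleGraph.Walk.nil, h => h
  | _, _, SimpleGraph.Walk.cons h' p, _ => walk_end_mem_D p ⟨h'.2.2.1, h'.2.2.2.2.1⟩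

lemma mem_D_of_reachable {Γ : Set E} {c : E → ℕ} {d₁ d₂ : ℕ} {g x : E}
    (hg : g ∈ Γ ∧ (c g = d₁ ∨ c g = d₂)) (h : (G.lineG Γ c d₁ d₂).Reachable g x) :
    x ∈ Γ ∧ (c x = d₁ ∨ c x = d₂) :=
  h.elim fun w => walk_end_mem_D w hg

lemma swapC_not_reachable {Γ : Set E} {c : E → ℕ} {d₁ d₂ : ℕ} {g x : E}
    (h : ¬ (G.lineG Γ c d₁ d₂).Reachable g x) : G.swapC Γ c d₁ d₂ g x = c x := by
  simp [swapC, h]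

lemma swapC_reachable₁ {Γ : Set E} {c : E → ℕ} {d₁ d₂ : ℕ} {g x : E}
    (h : (G.lineG Γ c d₁ d₂).Reachable g x) (hx : c x = d₁) :
    G.swapC Γ c d₁ d₂ g x = d₂ := by
  simp [swapC, h, hx]

lemma swapC_reachable₂ {Γ : Set E} {c : E → ℕ} {d₁ d₂ : ℕ} {g x : E}
    (h : (G.lineG Γ c d₁ d₂).Reachable g x) (hx : c x ≠ d₁) :
    G.swapC Γ c d₁ d₂ g x = d₁ := by
  simp [swapC, h, hx]

/-- Swapping a Kempe component preserves properness. -/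
lemma swapC_proper {Γ : Set E} {c : E → ℕ} {n : ℕ} (hc : G.ProperOn Γ c n)
    {d₁ d₂ : ℕ} (hd₁ : d₁ < n) (hd₂ : d₂ < n) (hne : d₁ ≠ d₂) {g : E}
    (hg : g ∈ Γ ∧ (c g = d₁ ∨ c g = d₂)) :
    G.ProperOn Γ (G.swapC Γ c d₁ d₂ g) n := by
  set L := G.lineG Γ c d₁ d₂ with hL
  constructor
  · intro x hx
    by_cases hr : L.Reachable g x
    · simp only [swapC, (show (G.lineG Γ c d₁ d₂).Reachable g x from hr), if_true]
      split <;> assumption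
    · rw [swapC_not_reachable hr]
      exact hc.1 x hx
  · intro x hx y hy hxy hshare
    by_cases hrx : L.Reachable g x <;> by_cases hry : L.Reachable g y
    · -- both swapped
      have hxD := mem_D_of_reachable hg hrx
      have hyD := mem_D_of_reachable hg hry
      have hcc : c x ≠ c y := hc.2 x hx y hy hxy hshare
      simp only [swapC, (show (G.lineG Γ c d₁ d₂).Reachable g x from hrx),
        (show (G.lineG Γ c d₁ d₂).Reachable g y from hry), if_true]
      rcases hxD.2 with h1 | h1 <;> rcases hyD.2 with h2 | h2 <;>
        simp [h1, h2, hne, Ne.symm hne] at hcc ⊢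
    · -- x swapped, y not: y cannot be in D
      have hxD := mem_D_of_reachable hg hrx
      have hyD : ¬ (y ∈ Γ ∧ (c y = d₁ ∨ c y = d₂)) := by
        intro hyD
        obtain ⟨w, hw1, hw2⟩ := hshare
        exact hry (hrx.trans ⟨SimpleGraph.Walk.cons
          (⟨hxy, hxD.1, hyD.1, hxD.2, hyD.2, w, hw1, hw2⟩ : L.Adj x y) SimpleGraph.Walk.nil⟩)
      rw [swapC_not_reachable hry]
      have hy2 : c y ≠ d₁ ∧ c y ≠ d₂ := by
        by_contra hcon
        push_neg at hcon
        rcases Classical.em (c y = d₁) with h | h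
        · exact hyD ⟨hy, Or.inl h⟩
        · exact hyD ⟨hy, Or.inr (hcon h)⟩
      simp only [swapC, (show (G.lineG Γ c d₁ d₂).Reachable g x from hrx), if_true]
      split
      · exact fun h => hy2.2 h.symm
      · exact fun h => hy2.1 h.symm
    · have hyD := mem_D_of_reachable hg hry
      have hxD : ¬ (x ∈ Γ ∧ (c x = d₁ ∨ c x = d₂)) := by
        intro hxD
        obtain ⟨w, hw1, hw2⟩ := hshare
        exact hrx (hry.trans ⟨SimpleGraph.Walk.cons
          (⟨hxy.symm, hyD.1, hxD.1, hyD.2, hxD.2, w, hw2, hw1⟩ : L.Adj y x) SimpleGraph.Walk.nil⟩)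
      rw [swapC_not_reachable hrx]
      have hx2 : c x ≠ d₁ ∧ c x ≠ d₂ := by
        by_contra hcon
        push_neg at hcon
        rcases Classical.em (c x = d₁) with h | h
        · exact hxD ⟨hx, Or.inl h⟩
        · exact hxD ⟨hx, Or.inr (hcon h)⟩
      simp only [swapC, (show (G.lineG Γ c d₁ d₂).Reachable g y from hry), if_true]
      split
      · exact fun h => hx2.2 h
      · exact fun h => hx2.1 h
    · rw [swapC_not_reachable hrx, swapC_not_reachable hry]
      exact hc.2 x hx y hy hxy hshare

/-! ### Path determinism in graphs of maximum degree two -/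

section PathDet

variable {H : SimpleGraph E}

/-- Interior vertices of a path have two distinct neighbors. -/
lemma path_interior_two_nbrs {a q r : E} (P : H.Walk a q) (hP : P.IsPath)
    (hr : r ∈ P.support) (hra : r ≠ a) (hrq : r ≠ q) :
    ∃ w w', w ≠ w' ∧ H.Adj r w ∧ H.Adj r w' := by
  induction P with
  | nil => simp only [SimpleGraph.Walk.support_nil, List.mem_singleton] at hr; exact absurd hr hra
  | @cons a a₁ q hadj P₁ ih =>
    rw [SimpleGraph.Walk.support_cons] at hr
    rcases List.mem_cons.1 hr with h | hr
    · exact absurd h hra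
    rw [SimpleGraph.Walk.cons_isPath_iff] at hP
    by_cases hra₁ : r = a₁
    · subst hra₁
      cases P₁ with
      | nil => exact absurd rfl hrq
      | cons hadj2 P₂ =>
        refine ⟨a, _, ?_, hadj.symm, hadj2⟩
        intro h
        rw [h] at hP
        exact hP.2 (SimpleGraph.Walk.support_cons _ _ ▸ List.mem_cons_of_mem _
          (SimpleGraph.Walk.start_mem_support P₂))
    · exact ih hP.1 hr hra₁ hrq

/-- Two paths out of a vertex with a unique available direction: one endpoint lies on the
other path. -/
lemma two_paths_meet
    (HB : ∀ x z w w', H.Adj x z → H.Adj x w → H.Adj x w' → w ≠ z → w' ≠ z → w = w') :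
    ∀ {a q r z : E} (P : H.Walk a q) (R : H.Walk a r), P.IsPath → R.IsPath →
      H.Adj z a → z ∉ P.support → z ∉ R.support → (r ∈ P.support ∨ q ∈ R.support) := by
  intro a q r z P
  induction P generalizing r z with
  | nil =>
    intro R _ _ _ _ _
    exact Or.inr (SimpleGraph.Walk.start_mem_support R)
  | @cons a a₁ q hadj P₁ ih =>
    intro R hP hR hza hzP hzR
    cases R with
    | nil => exact Or.inl (SimpleGraph.Walk.start_mem_support _)
    | @cons _ b₁ _ hadj' R₁ =>
      have hb : a₁ = b₁ := by
        refine HB a z a₁ b₁ hza.symm hadj hadj' ?_ ?_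
        · rintro rfl
          exact hzP (SimpleGraph.Walk.support_cons _ _ ▸ List.mem_cons_of_mem _
            (SimpleGraph.Walk.start_mem_support P₁))
        · rintro rfl
          exact hzR (SimpleGraph.Walk.support_cons _ _ ▸ List.mem_cons_of_mem _
            (SimpleGraph.Walk.start_mem_support R₁))
      subst hb
      rw [SimpleGraph.Walk.cons_isPath_iff] at hP hR
      have := ih (z := a) R₁ hP.1 hR.1 hadj hP.2 hR.2
      rcases this with h | h
      · exact Or.inl (SimpleGraph.Walk.support_cons _ _ ▸ List.mem_cons_of_mem _ h)
      · exact Or.inr (SimpleGraph.Walk.support_cons _ _ ▸ List.mem_cons_of_mem _ h)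

/-- Three distinct "leaves" cannot lie in one connected component of a graph with maximum
degree two. -/
lemma three_leaves_false
    (HB : ∀ x z w w', H.Adj x z → H.Adj x w → H.Adj x w' → w ≠ z → w' ≠ z → w = w')
    {p q r : E}
    (hp : ∀ w w', H.Adj p w → H.Adj p w' → w = w')
    (hq : ∀ w w', H.Adj q w → H.Adj q w' → w = w')
    (hr : ∀ w w', H.Adj r w → H.Adj r w' → w = w')
    (hpq : p ≠ q) (hpr : p ≠ r) (hqr : q ≠ r)
    (h1 : H.Reachable p q) (h2 : H.Reachable p r) : False := by
  obtain ⟨P0⟩ := h1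
  obtain ⟨R0⟩ := h2
  -- helper: a leaf on a path must be one of its endpoints
  have leaf_end : ∀ {x y w : E} (W : H.Walk x y), W.IsPath →
      (∀ u u', H.Adj w u → H.Adj w u' → u = u') → w ∈ W.support → w = x ∨ w = y := by
    intro x y w W hW hw hmem
    by_contra hcon
    push_neg at hcon
    obtain ⟨u, u', huu, hu1, hu2⟩ := path_interior_two_nbrs W hW hmem hcon.1 hcon.2
    exact huu (hw u u' hu1 hu2)
  have hPp : P0.bypass.IsPath := SimpleGraph.Walk.bypass_isPath P0
  have hRp : R0.bypass.IsPath := SimpleGraph.Walk.bypass_isPath R0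
  cases hPc : P0.bypass with
  | nil => exact hpq rfl
  | @cons _ a₁ _ hadj P₁ =>
    cases hRc : R0.bypass with
    | nil => exact hpr rfl
    | @cons _ b₁ _ hadj' R₁ =>
      rw [hPc] at hPp
      rw [hRc] at hRp
      have hb : a₁ = b₁ := hp a₁ b₁ hadj hadj'
      subst hb
      rw [SimpleGraph.Walk.cons_isPath_iff] at hPp hRp
      have hmeet := two_paths_meet HB P₁ R₁ hPp.1 hRp.1 hadj hPp.2 hRp.2
      rcases hmeet with h | h
      · -- r on the path P₁ : a₁ → q
        rcases leaf_end P₁ hPp.1 hr h with rfl | rfl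
        · -- r = a₁
          cases P₁ with
          | nil => exact hqr rfl
          | @cons _ a₂ _ hadj₂ P₂ =>
            have hpa : p = a₂ := hr p a₂ hadj.symm hadj₂
            subst hpa
            exact hPp.2 (SimpleGraph.Walk.support_cons _ _ ▸ List.mem_cons_of_mem _
              (SimpleGraph.Walk.start_mem_support P₂))
        · exact hqr rfl
      · rcases leaf_end R₁ hRp.1 hq h with rfl | rfl
        · cases R₁ with
          | nil => exact hqr rfl
          | @cons _ b₂ _ hadj₂ R₂ =>
            have hpb : p = b₂ := hq p b₂ hadj'.symm hadj₂
            subst hpb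
            exact hRp.2 (SimpleGraph.Walk.support_cons _ _ ▸ List.mem_cons_of_mem _
              (SimpleGraph.Walk.start_mem_support R₂))
        · exact hqr rfl

/-- A vertex with no neighbors reaches only itself. -/
lemma reachable_isolated {p x : E} (hiso : ∀ w, ¬ H.Adj p w) (h : H.Reachable p x) :
    x = p := by
  obtain ⟨W⟩ := h
  cases W with
  | nil => rfl
  | cons h _ => exact absurd h (hiso _)

end PathDet

/-- A fixed-point-free involution on a finite set forces even cardinality. -/
lemma even_card_of_involution (s : Finset ℕ) (φ : ℕ → ℕ)
    (hmem : ∀ a ∈ s, φ a ∈ s) (hinv : ∀ a ∈ s, φ (φ a) = a) (hfix : ∀ a ∈ s, φ a ≠ a) :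
    Even s.card := by
  classical
  suffices h : ∀ (n : ℕ) (t : Finset ℕ), t.card = n → (∀ a ∈ t, φ a ∈ t) →
      (∀ a ∈ t, φ (φ a) = a) → (∀ a ∈ t, φ a ≠ a) → Even n by
    exact h s.card s rfl hmem hinv hfix
  intro n
  induction n using Nat.strong_induction_on with
  | _ n ih =>
    intro t hcard h1 h2 h3
    rcases Finset.eq_empty_or_nonempty t with rfl | ⟨a, ha⟩
    · simp only [Finset.card_empty] at hcard
      exact hcard ▸ Even.zero
    · have hφa := h1 a ha
      have hane : φ a ≠ a := h3 a ha
      set t' := t \ {a, φ a} with ht'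
      have hsub : ({a, φ a} : Finset ℕ) ⊆ t := by
        intro x hx
        simp only [Finset.mem_insert, Finset.mem_singleton] at hx
        rcases hx with rfl | rfl
        · exact ha
        · exact hφa
      have hpaircard : ({a, φ a} : Finset ℕ).card = 2 := by
        rw [Finset.card_insert_of_notMem (by simpa using hane.symm)]
        simp
      have hcard' : t'.card = n - 2 := by
        rw [ht', Finset.card_sdiff_of_subset hsub, hpaircard, hcard]
      have h2le : 2 ≤ n := by
        have := Finset.card_le_card hsub
        omega
      have hmem' : ∀ b ∈ t', φ b ∈ t' := by
        intro b hb
        rw [ht', Finset.mem_sdiff] at hb ⊢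
        refine ⟨h1 b hb.1, ?_⟩
        have hb2 := hb.2
        simp only [Finset.mem_insert, Finset.mem_singleton] at hb2 ⊢
        push_neg at hb2 ⊢
        constructor
        · intro h
          have hh : φ (φ b) = φ a := by rw [h]
          rw [h2 b hb.1] at hh
          exact hb2.2 hh
        · intro h
          have hh : φ (φ b) = φ (φ a) := by rw [h]
          rw [h2 b hb.1, h2 a ha] at hh
          exact hb2.1 hh
      have hinv' : ∀ b ∈ t', φ (φ b) = b := fun b hb => h2 b (Finset.mem_sdiff.1 hb).1
      have hfix' : ∀ b ∈ t', φ b ≠ b := fun b hb => h3 b (Finset.mem_sdiff.1 hb).1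
      obtain ⟨k, hk⟩ := ih (n - 2) (by omega) t' hcard' hmem' hinv' hfix'
      exact ⟨k + 1, by omega⟩


/-! ### Pendant ports in Kempe components -/

section Ports

variable {Γ' : Set E} {cc : E → ℕ} {n d₁ d₂ : ℕ} {y : ℕ → V} {g : ℕ → E} {Q : ℕ → Prop}

/-- Uniqueness of the neighbor through a fixed endpoint. -/
lemma lineG_uniq (hprop : G.ProperOn Γ' cc n) (hd : d₁ ≠ d₂) {x w w' : E} {u : V}
    (hw : (G.lineG Γ' cc d₁ d₂).Adj x w) (hw' : (G.lineG Γ' cc d₁ d₂).Adj x w')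
    (hux : u ∈ G.inc x) (huw : u ∈ G.inc w) (huw' : u ∈ G.inc w') : w = w' := by
  obtain ⟨hxw, hxΓ, hwΓ, hxD, hwD, -⟩ := hw
  obtain ⟨hxw', -, hwΓ', -, hwD', -⟩ := hw'
  have h1 : cc w ≠ cc x := fun h => hprop.2 w hwΓ x hxΓ (Ne.symm hxw) ⟨u, huw, hux⟩ h
  have h2 : cc w' ≠ cc x := fun h => hprop.2 w' hwΓ' x hxΓ (Ne.symm hxw') ⟨u, huw', hux⟩ h
  have hval : cc w = cc w' := by
    rcases hxD with h | h <;> rcases hwD with h3 | h3 <;> rcases hwD' with h4 | h4 <;>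
      simp [h, h3, h4] at h1 h2 ⊢
  by_contra hne
  exact hprop.2 w hwΓ w' hwΓ' hne ⟨u, huw, huw'⟩ hval

/-- Bounded branching for the Kempe line graph. -/
lemma lineG_HB (hprop : G.ProperOn Γ' cc n) (hd : d₁ ≠ d₂) :
    ∀ x z w w', (G.lineG Γ' cc d₁ d₂).Adj x z → (G.lineG Γ' cc d₁ d₂).Adj x w →
      (G.lineG Γ' cc d₁ d₂).Adj x w' → w ≠ z → w' ≠ z → w = w' := by
  intro x z w w' hz hw hw' hwz hwz'
  obtain ⟨⟨u₁, u₂⟩, hu⟩ := (G.inc x).exists_rep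
  have hx : ∀ {t : E}, (G.lineG Γ' cc d₁ d₂).Adj x t → u₁ ∈ G.inc t ∨ u₂ ∈ G.inc t := by
    intro t ht
    obtain ⟨-, -, -, -, -, v', hv₁, hv₂⟩ := ht
    rw [← hu, Sym2.mem_iff] at hv₁
    rcases hv₁ with rfl | rfl
    · exact Or.inl hv₂
    · exact Or.inr hv₂
  have hu₁ : u₁ ∈ G.inc x := by rw [← hu]; exact Sym2.mem_mk_left _ _
  have hu₂ : u₂ ∈ G.inc x := by rw [← hu]; exact Sym2.mem_mk_right _ _
  by_cases hz1 : u₁ ∈ G.inc z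
  · -- any neighbor ≠ z must share u₂
    have hkey : ∀ {t : E}, (G.lineG Γ' cc d₁ d₂).Adj x t → t ≠ z → u₂ ∈ G.inc t := by
      intro t ht htz
      rcases hx ht with h | h
      · exact absurd (lineG_uniq hprop hd ht hz hu₁ h hz1) htz
      · exact h
    exact lineG_uniq hprop hd hw hw' hu₂ (hkey hw hwz) (hkey hw' hwz')
  · have hz2 : u₂ ∈ G.inc z := (hx hz).resolve_left hz1
    have hkey : ∀ {t : E}, (G.lineG Γ' cc d₁ d₂).Adj x t → t ≠ z → u₁ ∈ G.inc t := by
      intro t ht htz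
      rcases hx ht with h | h
      · exact h
      · exact absurd (lineG_uniq hprop hd ht hz hu₂ h hz2) htz
    exact lineG_uniq hprop hd hw hw' hu₁ (hkey hw hwz) (hkey hw' hwz')

/-- A pendant port is a leaf of the Kempe line graph. -/
lemma port_leaf (hprop : G.ProperOn Γ' cc n) (hd : d₁ ≠ d₂) {j : ℕ}
    (hgy : y j ∈ G.inc (g j))
    (hpend : ∀ x ∈ Γ', y j ∈ G.inc x → x = g j) :
    ∀ w w', (G.lineG Γ' cc d₁ d₂).Adj (g j) w → (G.lineG Γ' cc d₁ d₂).Adj (g j) w' →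
      w = w' := by
  intro w w' hw hw'
  set o := Sym2.Mem.other hgy with ho
  have hinc : G.inc (g j) = s(y j, o) := (Sym2.other_spec hgy).symm
  have hshare : ∀ {t : E}, (G.lineG Γ' cc d₁ d₂).Adj (g j) t → o ∈ G.inc t := by
    intro t ht
    obtain ⟨htne, htΓ1, htΓ, -, -, v', hv₁, hv₂⟩ := ht
    rw [hinc, Sym2.mem_iff] at hv₁
    rcases hv₁ with rfl | rfl
    · exact absurd (hpend t htΓ hv₂) (Ne.symm htne)
    · exact hv₂
  have hoinc : o ∈ G.inc (g j) := by rw [hinc]; exact Sym2.mem_mk_right _ _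
  exact lineG_uniq hprop hd hw hw' hoinc (hshare hw) (hshare hw')

/-- Three distinct pendant ports cannot lie in the same Kempe component. -/
lemma three_ports_false (hprop : G.ProperOn Γ' cc n) (hd : d₁ ≠ d₂)
    (hgΓ : ∀ j, Q j → g j ∈ Γ') (hgy : ∀ j, Q j → y j ∈ G.inc (g j))
    (hpend : ∀ j, Q j → ∀ x ∈ Γ', y j ∈ G.inc x → x = g j)
    (hyinj : ∀ i j, Q i → Q j → y i = y j → i = j)
    {a b c₀ : ℕ} (ha : Q a) (hb : Q b) (hc : Q c₀)
    (hab : a ≠ b) (hac : a ≠ c₀) (hbc : b ≠ c₀)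
    (hR1 : (G.lineG Γ' cc d₁ d₂).Reachable (g a) (g b))
    (hR2 : (G.lineG Γ' cc d₁ d₂).Reachable (g a) (g c₀)) : False := by
  set L := G.lineG Γ' cc d₁ d₂ with hL
  -- a doubly-pendant port is isolated
  have hiso : ∀ i j, Q i → Q j → i ≠ j → g i = g j → ∀ w, ¬ L.Adj (g i) w := by
    intro i j hi hj hij hgij w hadj
    have hyj : y j ∈ G.inc (g i) := hgij ▸ hgy j hj
    have hinc : G.inc (g i) = s(y i, y j) :=
      sym2_eq_of_ne_mem (hgy i hi) hyj (fun h => hij (hyinj i j hi hj h))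
    obtain ⟨hne, -, hwΓ, -, -, v', hv₁, hv₂⟩ := hadj
    rw [hinc, Sym2.mem_iff] at hv₁
    rcases hv₁ with rfl | rfl
    · exact hne.symm (hpend i hi w hwΓ hv₂)
    · exact hne.symm ((hgij ▸ hpend j hj) w hwΓ hv₂)
  have hvertex : ∀ i j, Q i → Q j → i ≠ j → g i ≠ g j → True := fun _ _ _ _ _ _ => trivial
  -- case analysis on coinciding port edges
  by_cases h1 : g a = g b
  · have := reachable_isolated (hiso a b ha hb hab h1) hR2
    have hyc : y c₀ ∈ G.inc (g a) := this ▸ hgy c₀ hc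
    have hinc : G.inc (g a) = s(y a, y b) :=
      sym2_eq_of_ne_mem (hgy a ha) (h1 ▸ hgy b hb) (fun h => hab (hyinj a b ha hb h))
    rw [hinc, Sym2.mem_iff] at hyc
    rcases hyc with h | h
    · exact hac (hyinj c₀ a hc ha h).symm
    · exact hbc (hyinj c₀ b hc hb h).symm
  by_cases h2 : g a = g c₀
  · have := reachable_isolated (hiso a c₀ ha hc hac h2) hR1
    have hyb : y b ∈ G.inc (g a) := this ▸ hgy b hb
    have hinc : G.inc (g a) = s(y a, y c₀) :=
      sym2_eq_of_ne_mem (hgy a ha) (h2 ▸ hgy c₀ hc) (fun h => hac (hyinj a c₀ ha hc h))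
    rw [hinc, Sym2.mem_iff] at hyb
    rcases hyb with h | h
    · exact hab (hyinj b a hb ha h).symm
    · exact hbc (hyinj b c₀ hb hc h)
  by_cases h3 : g b = g c₀
  · have := reachable_isolated (hiso b c₀ hb hc hbc h3) hR1.symm
    exact h1 this
  · exact three_leaves_false (lineG_HB hprop hd)
      (port_leaf hprop hd (hgy a ha) (hpend a ha))
      (port_leaf hprop hd (hgy b hb) (hpend b hb))
      (port_leaf hprop hd (hgy c₀ hc) (hpend c₀ hc))
      h1 h2 h3 hR1 hR2

/-- With an odd number of pendant ports, some port is alone in its Kempe component. -/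
lemma exists_lonely_port {nn : ℕ} (hodd : Odd nn)
    (hprop : G.ProperOn Γ' cc n) (hd : d₁ ≠ d₂)
    (hgΓ : ∀ j, j < nn → g j ∈ Γ') (hgy : ∀ j, j < nn → y j ∈ G.inc (g j))
    (hpend : ∀ j, j < nn → ∀ x ∈ Γ', y j ∈ G.inc x → x = g j)
    (hyinj : ∀ i j, i < nn → j < nn → y i = y j → i = j) :
    ∃ s, s < nn ∧ ∀ j, j < nn → (G.lineG Γ' cc d₁ d₂).Reachable (g s) (g j) → j = s := by
  set L := G.lineG Γ' cc d₁ d₂ with hL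
  by_contra hcon
  push_neg at hcon
  have hpart : ∀ s, s < nn → ∃ j, j < nn ∧ j ≠ s ∧ L.Reachable (g s) (g j) := by
    intro s hs
    obtain ⟨j, hj1, hj2, hj3⟩ := hcon s hs
    exact ⟨j, hj1, hj3, hj2⟩
  classical
  set φ : ℕ → ℕ := fun s =>
    if h : ∃ j, j < nn ∧ j ≠ s ∧ L.Reachable (g s) (g j) then h.choose else s with hφ
  have hφspec : ∀ s, s < nn → φ s < nn ∧ φ s ≠ s ∧ L.Reachable (g s) (g (φ s)) := by
    intro s hs
    have h := hpart s hs
    simp only [hφ, dif_pos h]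
    exact h.choose_spec
  have huniqpart : ∀ s, s < nn → ∀ j j', j < nn → j ≠ s → L.Reachable (g s) (g j) →
      j' < nn → j' ≠ s → L.Reachable (g s) (g j') → j = j' := by
    intro s hs j j' hj hjs hjR hj' hjs' hjR'
    by_contra hne
    exact three_ports_false (Q := fun i => i < nn) hprop hd hgΓ hgy hpend hyinj
      hs hj hj' (Ne.symm hjs) (Ne.symm hjs') hne hjR hjR'
  have heven := even_card_of_involution (Finset.range nn) φ
    (fun a hamem => by
      rw [Finset.mem_range] at hamem ⊢
      exact (hφspec a hamem).1)
    (fun a hamem => by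
      rw [Finset.mem_range] at hamem
      obtain ⟨h1, h2, h3⟩ := hφspec a hamem
      obtain ⟨h1', h2', h3'⟩ := hφspec (φ a) h1
      exact huniqpart (φ a) h1 (φ (φ a)) a h1' h2' h3' hamem (Ne.symm h2) h3.symm)
    (fun a hamem => by
      rw [Finset.mem_range] at hamem
      exact (hφspec a hamem).2.1)
  rw [Finset.card_range] at heven
  exact (Nat.not_even_iff_odd.2 hodd) heven

end Ports


/-! ### Recoloring an odd cycle given its port pattern -/

section Recolor

/-- The cycle recoloring pattern: `γ, α, β, α, β, …` around the cycle. -/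
def hpat (α β γ : ℕ) (i : ℕ) : ℕ := if i = 0 then γ else if i % 2 = 1 then α else β

/-- The port pattern `α, β, γ, γ, …`. -/
def ppat (α β γ : ℕ) (i : ℕ) : ℕ := if i = 0 then α else if i = 1 then β else γ

/-- Provided all ports of the odd cycle carry the pattern `α, β, γ, γ, …`, the whole
edge set (cycle plus the rest) can be properly 3-colored. -/
lemma recolor_cycle {nn : ℕ} (hodd : Odd nn) (h3 : 3 ≤ nn)
    {α β γ : ℕ} (hα : α < 3) (hβ : β < 3) (hγ : γ < 3)
    (hαβ : α ≠ β) (hαγ : α ≠ γ) (hβγ : β ≠ γ)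
    {FF : ℕ → E} {YY : ℕ → V} {gg : ℕ → E}
    (hFinj : ∀ i j, i < nn → j < nn → FF i = FF j → i = j)
    (hYinj : ∀ i j, i < nn → j < nn → YY i = YY j → i = j)
    (hincs : ∀ i, i < nn → G.inc (FF i) = s(YY i, YY (if i + 1 < nn then i + 1 else 0)))
    {W : Set E} {c₂ : E → ℕ}
    (hcycW : ∀ i, i < nn → FF i ∈ W)
    (hc₂ : G.ProperOn (W \ {t | ∃ i, i < nn ∧ t = FF i}) c₂ 3)
    (hpend : ∀ i, i < nn → ∀ t ∈ W \ {t | ∃ i, i < nn ∧ t = FF i},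
      YY i ∈ G.inc t → t = gg i)
    (hports : ∀ i, i < nn → ∀ t ∈ W \ {t | ∃ i, i < nn ∧ t = FF i},
      t = gg i → c₂ t = ppat α β γ i) :
    G.ColorableOn W 3 := by
  classical
  set cycE : Set E := {t | ∃ i, i < nn ∧ t = FF i} with hcycE
  set nxt : ℕ → ℕ := fun i => if i + 1 < nn then i + 1 else 0 with hnxt
  -- index of a cycle edge
  set idx : E → ℕ := fun t => if h : ∃ i, i < nn ∧ t = FF i then h.choose else 0 with hidx
  have hidx_spec : ∀ i, i < nn → idx (FF i) = i := by
    intro i hi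
    have h : ∃ j, j < nn ∧ FF i = FF j := ⟨i, hi, rfl⟩
    simp only [hidx, dif_pos h]
    exact (hFinj _ _ h.choose_spec.1 hi h.choose_spec.2.symm)
  set cstar : E → ℕ := fun t => if t ∈ cycE then hpat α β γ (idx t) else c₂ t with hcstar
  have hcstar_cyc : ∀ i, i < nn → cstar (FF i) = hpat α β γ i := by
    intro i hi
    simp only [hcstar, hcycE]
    rw [if_pos ⟨i, hi, rfl⟩, hidx_spec i hi]
  have hcstar_off : ∀ t, t ∉ cycE → cstar t = c₂ t := by
    intro t ht
    simp only [hcstar, if_neg ht]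
  -- parity facts about the patterns
  have hpat_lt : ∀ i, hpat α β γ i < 3 := by
    intro i
    simp only [hpat]
    split
    · exact hγ
    · split
      · exact hα
      · exact hβ
  have hnn1even : (nn - 1) % 2 = 0 := by
    obtain ⟨k, hk⟩ := hodd
    omega
  have hpat_adj : ∀ i, i < nn → hpat α β γ i ≠ hpat α β γ (nxt i) := by
    intro i hi
    have hnxtval : nxt i = if i + 1 < nn then i + 1 else 0 := rfl
    rcases Nat.lt_or_ge (i + 1) nn with h | h
    · rw [hnxtval, if_pos h]
      simp only [hpat]
      split_ifs <;> (try exact False.elim (by assumption)) <;> omega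
    · have hieq : i = nn - 1 := by omega
      subst hieq
      rw [hnxtval, if_neg (by omega)]
      simp only [hpat]
      split_ifs <;> (try exact False.elim (by assumption)) <;> omega
  have hpat_port : ∀ i, i < nn → ∀ a, (a = i ∨ a = nxt i) →
      hpat α β γ i ≠ ppat α β γ a := by
    intro i hi a ha
    have hnxtval : nxt i = if i + 1 < nn then i + 1 else 0 := rfl
    rcases ha with rfl | rfl
    · simp only [hpat, ppat]
      split_ifs <;> (try exact False.elim (by assumption)) <;> omega
    · rcases Nat.lt_or_ge (i + 1) nn with h | h
      · rw [hnxtval, if_pos h]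
        simp only [hpat, ppat]
        split_ifs <;> (try exact False.elim (by assumption)) <;> omega
      · have hieq : i = nn - 1 := by omega
        subst hieq
        rw [hnxtval, if_neg (by omega)]
        simp only [hpat, ppat]
        split_ifs <;> (try exact False.elim (by assumption)) <;> omega
  -- the shared-vertex analysis for cycle edges
  have hvert : ∀ i, i < nn → ∀ w : V, w ∈ G.inc (FF i) → w = YY i ∨ w = YY (nxt i) := by
    intro i hi w hw
    rw [hincs i hi] at hw
    simpa [hnxt] using Sym2.mem_iff.1 hw
  have hnxtlt : ∀ i, i < nn → nxt i < nn := by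
    intro i hi
    simp only [hnxt]
    split <;> omega
  refine ⟨cstar, ?_, ?_⟩
  · -- bound
    intro t ht
    by_cases h : t ∈ cycE
    · obtain ⟨i, hi, rfl⟩ := h
      rw [hcstar_cyc i hi]
      exact hpat_lt i
    · rw [hcstar_off t h]
      exact hc₂.1 t ⟨ht, h⟩
  · intro t ht t' ht' htt' hshare
    by_cases h : t ∈ cycE <;> by_cases h' : t' ∈ cycE
    · -- both cycle edges
      obtain ⟨i, hi, rfl⟩ := h
      obtain ⟨i', hi', rfl⟩ := h'
      obtain ⟨w, hw, hw'⟩ := hshare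
      have h1 := hvert i hi w hw
      have h2 := hvert i' hi' w hw'
      have hii' : i ≠ i' := fun hcon => htt' (by rw [hcon])
      have hcase : i' = nxt i ∨ i = nxt i' := by
        rcases h1 with h1e | h1e <;> rcases h2 with h2e | h2e <;> rw [h1e] at h2e
        · exact absurd (hYinj i i' hi hi' h2e) hii'
        · exact Or.inr (hYinj _ _ hi (hnxtlt i' hi') h2e)
        · exact Or.inl (hYinj _ _ (hnxtlt i hi) hi' h2e).symm
        · -- nxt i = nxt i' → i = i'
          have heq := hYinj _ _ (hnxtlt i hi) (hnxtlt i' hi') h2e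
          simp only [hnxt] at heq
          split_ifs at heq <;> omega
      rw [hcstar_cyc i hi, hcstar_cyc i' hi']
      rcases hcase with rfl | rfl
      · exact hpat_adj i hi
      · exact (hpat_adj i' hi').symm
    · -- t cycle, t' port
      obtain ⟨i, hi, rfl⟩ := h
      obtain ⟨w, hw, hw'⟩ := hshare
      have h1 := hvert i hi w hw
      have ha : ∃ a, (a = i ∨ a = nxt i) ∧ a < nn ∧ t' = gg a := by
        rcases h1 with rfl | rfl
        · exact ⟨i, Or.inl rfl, hi, hpend i hi t' ⟨ht', h'⟩ hw'⟩
        · exact ⟨nxt i, Or.inr rfl, hnxtlt i hi, hpend (nxt i) (hnxtlt i hi) t' ⟨ht', h'⟩ hw'⟩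
      obtain ⟨a, haor, halt, hta⟩ := ha
      rw [hcstar_cyc i hi, hcstar_off t' h',
        hports a halt t' ⟨ht', h'⟩ hta]
      exact hpat_port i hi a haor
    · -- t port, t' cycle
      obtain ⟨i, hi, rfl⟩ := h'
      obtain ⟨w, hw', hw⟩ := hshare
      have h1 := hvert i hi w hw
      have ha : ∃ a, (a = i ∨ a = nxt i) ∧ a < nn ∧ t = gg a := by
        rcases h1 with rfl | rfl
        · exact ⟨i, Or.inl rfl, hi, hpend i hi t ⟨ht, h⟩ hw'⟩
        · exact ⟨nxt i, Or.inr rfl, hnxtlt i hi, hpend (nxt i) (hnxtlt i hi) t ⟨ht, h⟩ hw'⟩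
      obtain ⟨a, haor, halt, hta⟩ := ha
      rw [hcstar_cyc i hi, hcstar_off t h,
        hports a halt t ⟨ht, h⟩ hta]
      exact (hpat_port i hi a haor).symm
    · rw [hcstar_off t h, hcstar_off t' h']
      exact hc₂.2 t ⟨ht, h⟩ t' ⟨ht', h'⟩ htt' hshare

end Recolor


/-! ### Extraction helpers -/

lemma extract_two {M : Set E} (hM : M.ncard = 2) {p : E} (hp : p ∈ M) :
    ∃ r, r ∈ M ∧ r ≠ p ∧ ∀ z ∈ M, z = p ∨ z = r := by
  have h1 : (M \ {p}).ncard = 1 := by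
    rw [Set.ncard_diff_singleton_of_mem hp, hM]
  obtain ⟨r, hr⟩ := Set.ncard_eq_one.1 h1
  have hrM : r ∈ M \ {p} := by rw [hr]; exact rfl
  refine ⟨r, hrM.1, hrM.2, fun z hz => ?_⟩
  by_cases hzp : z = p
  · exact Or.inl hzp
  · have : z ∈ M \ {p} := ⟨hz, hzp⟩
    rw [hr] at this
    exact Or.inr this

lemma extract_three {M : Set E} (hM : M.ncard = 3) {p q : E} (hp : p ∈ M) (hq : q ∈ M)
    (hpq : p ≠ q) : ∃ r, r ∈ M ∧ r ≠ p ∧ r ≠ q ∧ ∀ z ∈ M, z = p ∨ z = q ∨ z = r := by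
  have hsub : ({p, q} : Set E) ⊆ M := by
    intro z hz
    rcases hz with rfl | rfl
    · exact hp
    · exact hq
  have h1 : (M \ {p, q}).ncard = 1 := by
    rw [Set.ncard_diff hsub (Set.toFinite _), Set.ncard_pair hpq, hM]
  obtain ⟨r, hr⟩ := Set.ncard_eq_one.1 h1
  have hrM : r ∈ M \ {p, q} := by rw [hr]; exact rfl
  have hrne : r ≠ p ∧ r ≠ q := by
    have := hrM.2
    simp only [Set.mem_insert_iff, Set.mem_singleton_iff] at this
    push_neg at this
    exact this
  refine ⟨r, hrM.1, hrne.1, hrne.2, fun z hz => ?_⟩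
  by_cases hzp : z = p
  · exact Or.inl hzp
  by_cases hzq : z = q
  · exact Or.inr (Or.inl hzq)
  · have : z ∈ M \ {p, q} := ⟨hz, by
      simp only [Set.mem_insert_iff, Set.mem_singleton_iff]
      push_neg
      exact ⟨hzp, hzq⟩⟩
    rw [hr] at this
    exact Or.inr (Or.inr this)

/-! ### The odd-cycle endgame -/

lemma endgame {A F S : Set E} {nn : ℕ}
    (hlex : G.IsLexMax A F 3 S) (hFA : F ⊆ A)
    (hFdeg : ∀ w : V, {f ∈ F | w ∈ G.inc f}.ncard ≤ 2)
    {c : E → ℕ} (hc : G.ProperOn S c 3)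
    (hodd : Odd nn) (h3nn : 3 ≤ nn)
    {y : ℕ → V} {f : ℕ → E} {α β : ℕ}
    (hα : α < 3) (hβ : β < 3) (hαβ : α ≠ β)
    (heF : f 0 ∈ F) (heS : f 0 ∉ S)
    (hfS : ∀ j, 1 ≤ j → j < nn → f j ∈ S)
    (hfF : ∀ j, j < nn → f j ∈ F)
    (hinc : ∀ j, j < nn → G.inc (f j) = s(y j, y (if j + 1 < nn then j + 1 else 0)))
    (hcol : ∀ j, 1 ≤ j → j < nn → c (f j) = if j % 2 = 1 then α else β)
    (hyinj : ∀ i j, i < nn → j < nn → y i = y j → i = j)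
    (hfinj : ∀ i j, i < nn → j < nn → f i = f j → i = j)
    (hdeg : ∀ j, 2 ≤ j → j < nn → G.degOn S (y j) = 3)
    (hdeg0 : G.degOn S (y 0) = 2) (hdeg1 : G.degOn S (y 1) = 2)
    (hm0 : G.MissingAt S c α (y 0)) (hm1 : G.MissingAt S c β (y 1)) : False := by
  classical
  set γ := 3 - α - β with hγdef
  have hγ3 : γ < 3 := by omega
  have hαγ : α ≠ γ := by omega
  have hβγ : β ≠ γ := by omega
  have hnn1 : (nn - 1) % 2 = 0 := by
    obtain ⟨k, hk⟩ := hodd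
    omega
  set cycE : Set E := {t | ∃ i, i < nn ∧ t = f i} with hcycE
  -- which cycle edges pass through y j
  have hcycAt : ∀ j, j < nn → ∀ i, i < nn → y j ∈ G.inc (f i) →
      (i = j ∨ (i + 1 < nn ∧ j = i + 1) ∨ (i = nn - 1 ∧ j = 0)) := by
    intro j hj i hi hyj
    rw [hinc i hi, Sym2.mem_iff] at hyj
    rcases hyj with h | h
    · exact Or.inl (hyinj i j hi hj h.symm)
    · by_cases hi1 : i + 1 < nn
      · rw [if_pos hi1] at h
        exact Or.inr (Or.inl ⟨hi1, hyinj j (i+1) hj hi1 h⟩)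
      · rw [if_neg hi1] at h
        exact Or.inr (Or.inr ⟨by omega, hyinj j 0 hj (by omega) h⟩)
  -- basic incidences
  have hfprev : ∀ j, 1 ≤ j → j < nn → y j ∈ G.inc (f (j - 1)) := by
    intro j h1 h2
    rw [hinc (j-1) (by omega), if_pos (by omega : j - 1 + 1 < nn)]
    have : j - 1 + 1 = j := by omega
    rw [this]
    exact Sym2.mem_mk_right _ _
  have hfown : ∀ j, j < nn → y j ∈ G.inc (f j) := by
    intro j hj
    rw [hinc j hj]
    exact Sym2.mem_mk_left _ _
  have hflast0 : y 0 ∈ G.inc (f (nn - 1)) := by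
    rw [hinc (nn-1) (by omega), if_neg (by omega)]
    exact Sym2.mem_mk_right _ _
  -- port construction
  have hport : ∀ j, ∃ gj, j < nn →
      gj ∈ S ∧ y j ∈ G.inc gj ∧ gj ∉ cycE ∧ c gj = γ ∧
      (∀ x ∈ S, y j ∈ G.inc x → x ∉ cycE → x = gj) := by
    intro j
    by_cases hj : j < nn
    swap
    · exact ⟨f 0, fun h => absurd h hj⟩
    rcases Nat.lt_or_ge j 2 with hj2 | hj2
    · -- j = 0 or j = 1
      interval_cases j
      · -- j = 0
        obtain ⟨r, hrM, hrp, hrall⟩ := extract_two (M := G.eAt S (y 0)) hdeg0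
          (p := f (nn - 1)) ⟨hfS (nn-1) (by omega) (by omega), hflast0⟩
        refine ⟨r, fun _ => ⟨hrM.1, hrM.2, ?_, ?_, ?_⟩⟩
        · rintro ⟨i, hi, rfl⟩
          rcases hcycAt 0 (by omega) i hi hrM.2 with h | h | h
          · exact heS (h ▸ hrM.1)
          · omega
          · exact hrp (by rw [h.1])
        · have h1 : c r ≠ β := by
            have hcl : c (f (nn-1)) = β := by
              rw [hcol (nn-1) (by omega) (by omega), if_neg (by omega)]
            intro hcr
            exact hc.2 r hrM.1 (f (nn-1)) (hfS (nn-1) (by omega) (by omega))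
              hrp ⟨y 0, hrM.2, hflast0⟩ (hcr.trans hcl.symm)
          have h2 : c r ≠ α := hm0 r hrM.1 hrM.2
          have h3 : c r < 3 := hc.1 r hrM.1
          omega
        · intro x hxS hxinc hxcyc
          rcases hrall x ⟨hxS, hxinc⟩ with h | h
          · exact absurd ⟨nn - 1, by omega, h⟩ hxcyc
          · exact h
      · -- j = 1
        obtain ⟨r, hrM, hrp, hrall⟩ := extract_two (M := G.eAt S (y 1)) hdeg1
          (p := f 1) ⟨hfS 1 (by omega) (by omega), hfown 1 (by omega)⟩
        refine ⟨r, fun _ => ⟨hrM.1, hrM.2, ?_, ?_, ?_⟩⟩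
        · rintro ⟨i, hi, rfl⟩
          rcases hcycAt 1 (by omega) i hi hrM.2 with h | h | h
          · exact hrp (by rw [h])
          · have : i = 0 := by omega
            exact heS (this ▸ hrM.1)
          · omega
        · have h1 : c r ≠ α := by
            have hcl : c (f 1) = α := by
              rw [hcol 1 (by omega) (by omega), if_pos (by omega)]
            intro hcr
            exact hc.2 r hrM.1 (f 1) (hfS 1 (by omega) (by omega))
              hrp ⟨y 1, hrM.2, hfown 1 (by omega)⟩ (hcr.trans hcl.symm)
          have h2 : c r ≠ β := hm1 r hrM.1 hrM.2
          have h3 : c r < 3 := hc.1 r hrM.1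
          omega
        · intro x hxS hxinc hxcyc
          rcases hrall x ⟨hxS, hxinc⟩ with h | h
          · exact absurd ⟨1, by omega, h⟩ hxcyc
          · exact h
    · -- 2 ≤ j
      have hfj1 : f (j-1) ∈ G.eAt S (y j) :=
        ⟨hfS (j-1) (by omega) (by omega), hfprev j (by omega) hj⟩
      have hfjj : f j ∈ G.eAt S (y j) := ⟨hfS j (by omega) hj, hfown j hj⟩
      have hne : f (j-1) ≠ f j := fun h => by
        have := hfinj (j-1) j (by omega) hj h
        omega
      obtain ⟨r, hrM, hrp, hrq, hrall⟩ :=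
        extract_three (M := G.eAt S (y j)) (hdeg j hj2 hj) hfj1 hfjj hne
      refine ⟨r, fun _ => ⟨hrM.1, hrM.2, ?_, ?_, ?_⟩⟩
      · rintro ⟨i, hi, rfl⟩
        rcases hcycAt j hj i hi hrM.2 with h | h | h
        · exact hrq (by rw [h])
        · have : i = j - 1 := by omega
          exact hrp (by rw [this])
        · omega
      · have hv1 : c (f (j-1)) ≠ c r := fun h =>
          hc.2 (f (j-1)) hfj1.1 r hrM.1 (Ne.symm hrp) ⟨y j, hfj1.2, hrM.2⟩ h
        have hv2 : c (f j) ≠ c r := fun h =>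
          hc.2 (f j) hfjj.1 r hrM.1 (Ne.symm hrq) ⟨y j, hfjj.2, hrM.2⟩ h
        have hc1 := hcol (j-1) (by omega) (by omega)
        have hc2 := hcol j (by omega) hj
        have h3 : c r < 3 := hc.1 r hrM.1
        by_cases hp : j % 2 = 1
        · rw [if_pos hp] at hc2
          rw [if_neg (by omega)] at hc1
          omega
        · rw [if_neg hp] at hc2
          rw [if_pos (by omega)] at hc1
          omega
      · intro x hxS hxinc hxcyc
        rcases hrall x ⟨hxS, hxinc⟩ with h | h | h
        · exact absurd ⟨j - 1, by omega, h⟩ hxcyc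
        · exact absurd ⟨j, hj, h⟩ hxcyc
        · exact h
  choose g hg using hport
  -- the off-cycle subgraph
  set Γ' : Set E := S \ cycE with hΓ'
  have hgS : ∀ j, j < nn → g j ∈ S := fun j hj => (hg j hj).1
  have hgy : ∀ j, j < nn → y j ∈ G.inc (g j) := fun j hj => (hg j hj).2.1
  have hgcyc : ∀ j, j < nn → g j ∉ cycE := fun j hj => (hg j hj).2.2.1
  have hgγ : ∀ j, j < nn → c (g j) = γ := fun j hj => (hg j hj).2.2.2.1
  have hgΓ : ∀ j, j < nn → g j ∈ Γ' := fun j hj => ⟨hgS j hj, hgcyc j hj⟩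
  have hpend : ∀ j, j < nn → ∀ x ∈ Γ', y j ∈ G.inc x → x = g j :=
    fun j hj x hx hyx => (hg j hj).2.2.2.2 x hx.1 hyx hx.2
  have hΓprop : G.ProperOn Γ' c 3 := hc.mono Set.diff_subset
  -- g j is never an F-edge
  have hgF : ∀ j, j < nn → g j ∉ F := by
    intro j hj hgjF
    have hfjF : f j ∈ {x ∈ F | y j ∈ G.inc x} := ⟨hfF j hj, hfown j hj⟩
    have hprevidx : ∀ pj, pj < nn → f pj ∈ F → y j ∈ G.inc (f pj) → f pj ≠ f j →
        g j ∈ ({f pj, f j} : Set E) → False := by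
      intro pj hpj hpjF hpjinc hpjne hmem
      rcases hmem with h | h
      · exact hgcyc j hj ⟨pj, hpj, h⟩
      · exact hgcyc j hj ⟨j, hj, h⟩
    by_cases hj0 : j = 0
    · subst hj0
      have hplast : f (nn-1) ∈ {x ∈ F | y 0 ∈ G.inc x} := ⟨hfF (nn-1) (by omega), hflast0⟩
      have hne : f (nn-1) ≠ f 0 := fun h => by
        have := hfinj (nn-1) 0 (by omega) (by omega) h
        omega
      rcases mem_pair_of_ncard_le_two hplast hfjF hne (hFdeg (y 0))
        ⟨hgjF, hgy 0 hj⟩ with h | h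
      · exact hgcyc 0 hj ⟨nn - 1, by omega, h⟩
      · exact hgcyc 0 hj ⟨0, hj, h⟩
    · have hprev : f (j-1) ∈ {x ∈ F | y j ∈ G.inc x} :=
        ⟨hfF (j-1) (by omega), hfprev j (by omega) hj⟩
      have hne : f (j-1) ≠ f j := fun h => by
        have := hfinj (j-1) j (by omega) hj h
        omega
      rcases mem_pair_of_ncard_le_two hprev hfjF hne (hFdeg (y j))
        ⟨hgjF, hgy j hj⟩ with h | h
      · exact hgcyc j hj ⟨j - 1, by omega, h⟩
      · exact hgcyc j hj ⟨j, hj, h⟩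
  -- first Kempe swap: the lonely port s
  obtain ⟨s, hs, hlone⟩ := exists_lonely_port (G := G) (n := 3) (d₁ := α) (d₂ := γ)
    hodd hΓprop hαγ hgΓ hgy hpend hyinj
  have hgsD : g s ∈ Γ' ∧ (c (g s) = α ∨ c (g s) = γ) := ⟨hgΓ s hs, Or.inr (hgγ s hs)⟩
  set c₁ := G.swapC Γ' c α γ (g s) with hc₁def
  have hc₁ : G.ProperOn Γ' c₁ 3 := swapC_proper hΓprop hα hγ3 hαγ hgsD
  have hc₁s : c₁ (g s) = α :=
    swapC_reachable₂ (SimpleGraph.Reachable.refl _) (by rw [hgγ s hs]; omega)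
  have hc₁j : ∀ j, j < nn → j ≠ s → c₁ (g j) = γ := by
    intro j hj hjs
    rw [hc₁def, swapC_not_reachable (fun h => hjs (hlone j hj h)), hgγ j hj]
  -- the second swap at the cyclic successor of s
  set s' := if s + 1 < nn then s + 1 else 0 with hs'def
  have hs' : s' < nn := by rw [hs'def]; split <;> omega
  have hss' : s' ≠ s := by
    rw [hs'def]
    split
    · omega
    · omega
  have hs0 : s' = 0 → s = nn - 1 := by
    rw [hs'def]
    split
    · omega
    · omega
  have hc₁s' : c₁ (g s') = γ := hc₁j s' hs' hss'
  have hnr : ¬ (G.lineG Γ' c₁ β γ).Reachable (g s') (g s) := by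
    intro h
    have := mem_D_of_reachable ⟨hgΓ s' hs', Or.inr hc₁s'⟩ h
    rw [hc₁s] at this
    rcases this.2 with h | h <;> omega
  set c₂ := G.swapC Γ' c₁ β γ (g s') with hc₂def
  have hc₂ : G.ProperOn Γ' c₂ 3 := swapC_proper hc₁ hβ hγ3 hβγ ⟨hgΓ s' hs', Or.inr hc₁s'⟩
  have hc₂s' : c₂ (g s') = β :=
    swapC_reachable₂ (SimpleGraph.Reachable.refl _) (by rw [hc₁s']; omega)
  have hc₂s : c₂ (g s) = α := by
    rw [hc₂def, swapC_not_reachable hnr, hc₁s]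
  -- the uniqueness of a possible second port in the second component
  have huniq2 : ∀ j j', j < nn → j ≠ s → j ≠ s' →
      (G.lineG Γ' c₁ β γ).Reachable (g s') (g j) →
      j' < nn → j' ≠ s → j' ≠ s' → (G.lineG Γ' c₁ β γ).Reachable (g s') (g j') →
      j = j' := by
    intro j j' hj hjs hjs' hjR hj' hjs2 hjs2' hjR'
    by_contra hne
    exact three_ports_false (Q := fun i => i < nn) hc₁ hβγ hgΓ hgy hpend hyinj
      hs' hj hj' (Ne.symm hjs') (Ne.symm hjs2') hne hjR hjR'
  -- offsets
  set jth : ℕ → ℕ := fun i => if i + s < nn then i + s else i + s - nn with hjth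
  have hjth_lt : ∀ i, i < nn → jth i < nn := by
    intro i hi
    rw [hjth]
    simp only
    split <;> omega
  have hjth0 : jth 0 = s := by rw [hjth]; simp only; split <;> omega
  have hjth1 : jth 1 = s' := by
    rw [hjth, hs'def]
    simp only
    split <;> split <;> omega
  have hjth_inj : ∀ i i', i < nn → i' < nn → jth i = jth i' → i = i' := by
    intro i i' hi hi' h
    rw [hjth] at h
    simp only at h
    split_ifs at h <;> omega
  have hjth_nxt : ∀ i, i < nn →
      jth (if i + 1 < nn then i + 1 else 0) =
        (if jth i + 1 < nn then jth i + 1 else 0) := by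
    intro i hi
    rw [hjth]
    simp only
    split_ifs <;> omega
  set FF : ℕ → E := fun i => f (jth i) with hFF
  set YY : ℕ → V := fun i => y (jth i) with hYY
  set gg : ℕ → E := fun i => g (jth i) with hgg
  have hcycEq : {t | ∃ i, i < nn ∧ t = FF i} = cycE := by
    ext t
    constructor
    · rintro ⟨i, hi, rfl⟩
      exact ⟨jth i, hjth_lt i hi, rfl⟩
    · rintro ⟨j, hj, rfl⟩
      set i := if s ≤ j then j - s else j + nn - s with hi
      refine ⟨i, by rw [hi]; split <;> omega, ?_⟩
      rw [hFF]
      simp only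
      have : jth i = j := by
        rw [hjth, hi]
        simp only
        split_ifs <;> omega
      rw [this]
  -- assemble the two cases
  have hmain : ∀ (W : Set E), (∀ i, i < nn → FF i ∈ W) →
      (W \ cycE ⊆ Γ') →
      (∀ i, i < nn → ∀ t, t ∈ W \ cycE → t = gg i → c₂ t = ppat α β γ i) →
      G.ColorableOn W 3 := by
    intro W hcycW hWΓ hports
    refine recolor_cycle (FF := FF) (YY := YY) (gg := gg) hodd h3nn hα hβ hγ3 hαβ hαγ hβγ
      (fun i i' hi hi' h => hjth_inj i i' hi hi' (hfinj _ _ (hjth_lt i hi) (hjth_lt i' hi') h))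
      (fun i i' hi hi' h => hjth_inj i i' hi hi' (hyinj _ _ (hjth_lt i hi) (hjth_lt i' hi') h))
      (fun i hi => ?_) hcycW (by rw [hcycEq]; exact hc₂.mono hWΓ)
      (fun i hi t ht hyt => ?_) (fun i hi t ht h => ?_)
    · rw [hFF, hYY]
      simp only
      rw [hinc (jth i) (hjth_lt i hi), hjth_nxt i hi]
    · rw [hcycEq] at ht
      exact hpend (jth i) (hjth_lt i hi) t (hWΓ ht) hyt
    · rw [hcycEq] at ht
      exact hports i hi t ht h
  -- the two cases according to whether the second component grabs another port
  by_cases hX : ∃ x, x < nn ∧ x ≠ s ∧ x ≠ s' ∧ (G.lineG Γ' c₁ β γ).Reachable (g s') (g x)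
  · -- Case B : delete the second port
    obtain ⟨x, hx, hxs, hxs', hxR⟩ := hX
    set W : Set E := insert (f 0) (S \ {g x}) with hW
    have hcycW : ∀ i, i < nn → FF i ∈ W := by
      intro i hi
      rw [hFF]
      simp only
      by_cases h0 : jth i = 0
      · rw [h0]
        exact Set.mem_insert _ _
      · refine Set.mem_insert_of_mem _ ⟨hfS (jth i) (by omega) (hjth_lt i hi), ?_⟩
        simp only [Set.mem_singleton_iff]
        intro h
        exact hgcyc x hx ⟨jth i, hjth_lt i hi, h.symm⟩
    have hWΓ : W \ cycE ⊆ Γ' := by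
      intro t ht
      rcases ht.1 with rfl | hts
      · exact absurd ⟨0, by omega, rfl⟩ ht.2
      · exact ⟨hts.1, ht.2⟩
    have hports : ∀ i, i < nn → ∀ t, t ∈ W \ cycE → t = gg i → c₂ t = ppat α β γ i := by
      intro i hi t ht hgt
      have htgx : t ≠ g x := by
        intro h
        rcases ht.1 with h' | h'
        · refine heS ?_
          rw [← h', h]
          exact hgS x hx
        · exact h'.2 h
      rw [hgg] at hgt
      simp only at hgt
      by_cases hi0 : i = 0
      · subst hi0
        rw [hgt, hjth0, hc₂s, ppat]
        simp
      by_cases hi1 : i = 1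
      · subst hi1
        rw [hgt, hjth1, hc₂s', ppat]
        simp
      · -- i ≥ 2 : the port must be colored γ
        have hj := hjth_lt i hi
        have hjs : jth i ≠ s := fun h => hi0 (hjth_inj i 0 hi (by omega) (h.trans hjth0.symm))
        have hjs' : jth i ≠ s' := fun h => hi1 (hjth_inj i 1 hi (by omega) (h.trans hjth1.symm))
        have hjx : jth i ≠ x := by
          intro h
          exact htgx (by rw [hgt, h])
        have hnr2 : ¬ (G.lineG Γ' c₁ β γ).Reachable (g s') (g (jth i)) := by
          intro h
          exact hjx (huniq2 (jth i) x hj hjs hjs' h hx hxs hxs' hxR)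
        rw [hgt, hc₂def, swapC_not_reachable hnr2, hc₁j (jth i) hj hjs, ppat,
          if_neg hi0, if_neg hi1]
    have hcolW := hmain W hcycW hWΓ hports
    have hWA : W ⊆ A := by
      rw [hW]
      exact Set.insert_subset (hFA heF) ((Set.diff_subset).trans hlex.1)
    have hlexW := hlex.2.2 W hWA hcolW
    have hcard : W.ncard = S.ncard := swap_ncard heS (hgS x hx)
    have hFcard := hlexW.2 (le_of_eq hcard.symm)
    have hint : W ∩ F = insert (f 0) (S ∩ F) := by
      ext t
      simp only [hW, Set.mem_inter_iff, Set.mem_insert_iff, Set.mem_diff,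
        Set.mem_singleton_iff]
      constructor
      · rintro ⟨rfl | ⟨htS, _⟩, htF⟩
        · exact Or.inl rfl
        · exact Or.inr ⟨htS, htF⟩
      · rintro (rfl | ⟨htS, htF⟩)
        · exact ⟨Or.inl rfl, heF⟩
        · exact ⟨Or.inr ⟨htS, fun h => (hgF x hx) (h ▸ htF)⟩, htF⟩
    rw [hint, Set.ncard_insert_of_notMem (fun h => heS h.1) (Set.toFinite _)] at hFcard
    omega
  · -- Case A : the whole graph S + e can be colored
    push_neg at hX
    set W : Set E := insert (f 0) S with hW
    have hcycW : ∀ i, i < nn → FF i ∈ W := by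
      intro i hi
      rw [hFF]
      simp only
      by_cases h0 : jth i = 0
      · rw [h0]
        exact Set.mem_insert _ _
      · exact Set.mem_insert_of_mem _ (hfS (jth i) (by omega) (hjth_lt i hi))
    have hWΓ : W \ cycE ⊆ Γ' := by
      intro t ht
      rcases ht.1 with rfl | hts
      · exact absurd ⟨0, by omega, rfl⟩ ht.2
      · exact ⟨hts, ht.2⟩
    have hports : ∀ i, i < nn → ∀ t, t ∈ W \ cycE → t = gg i → c₂ t = ppat α β γ i := by
      intro i hi t ht hgt
      rw [hgg] at hgt
      simp only at hgt
      by_cases hi0 : i = 0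
      · subst hi0
        rw [hgt, hjth0, hc₂s, ppat]
        simp
      by_cases hi1 : i = 1
      · subst hi1
        rw [hgt, hjth1, hc₂s', ppat]
        simp
      · have hj := hjth_lt i hi
        have hjs : jth i ≠ s := fun h => hi0 (hjth_inj i 0 hi (by omega) (h.trans hjth0.symm))
        have hjs' : jth i ≠ s' := fun h => hi1 (hjth_inj i 1 hi (by omega) (h.trans hjth1.symm))
        have hnr2 : ¬ (G.lineG Γ' c₁ β γ).Reachable (g s') (g (jth i)) :=
          fun h => (hX (jth i) hj hjs hjs') h
        rw [hgt, hc₂def, swapC_not_reachable hnr2, hc₁j (jth i) hj hjs, ppat,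
          if_neg hi0, if_neg hi1]
    have hcolW := hmain W hcycW hWΓ hports
    have hWA : W ⊆ A := Set.insert_subset (hFA heF) hlex.1
    have hlexW := (hlex.2.2 W hWA hcolW).1
    rw [hW, Set.ncard_insert_of_notMem heS (Set.toFinite _)] at hlexW
    omega


/-! ### The rotation engine -/

lemma degOn_lt_of_uncolored {A S : Set E} (hSA : S ⊆ A) {x : E} (hxA : x ∈ A) (hxS : x ∉ S)
    {v : V} (hv : v ∈ G.inc x) {n : ℕ} (hdegA : G.degOn A v ≤ n) : G.degOn S v < n := by
  have hsub : G.eAt S v ⊆ G.eAt A v \ {x} := by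
    intro z hz
    exact ⟨⟨hSA hz.1, hz.2⟩, fun h => hxS (h ▸ hz.1)⟩
  have h1 : (G.eAt A v \ {x}).ncard = (G.eAt A v).ncard - 1 :=
    Set.ncard_diff_singleton_of_mem ⟨hxA, hv⟩
  have h2 : 1 ≤ (G.eAt A v).ncard := by
    have : ({x} : Set E) ⊆ G.eAt A v := Set.singleton_subset_iff.2 ⟨hxA, hv⟩
    simpa using Set.ncard_le_ncard this (Set.toFinite _)
  have h3 := Set.ncard_le_ncard hsub (Set.toFinite _)
  rw [degOn_def]
  rw [degOn_def] at hdegA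
  omega

lemma eAt_swap_not_inc {S : Set E} {e fk : E} {w : V} (hw : w ∉ G.inc e) :
    G.eAt (insert e (S \ {fk})) w = G.eAt S w \ {fk} := by
  ext x
  constructor
  · rintro ⟨rfl | hx, hxw⟩
    · exact absurd hxw hw
    · exact ⟨⟨hx.1, hxw⟩, hx.2⟩
  · rintro ⟨⟨hxS, hxw⟩, hxfk⟩
    exact ⟨Set.mem_insert_of_mem _ ⟨hxS, hxfk⟩, hxw⟩

lemma swap_set_eq {S : Set E} {e fk h : E} (hfkS : fk ∈ S) (hhe : h ≠ e) (hhfk : h ≠ fk)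
    (heS : e ∉ S) : insert fk ((insert e (S \ {fk})) \ {h}) = insert e (S \ {h}) := by
  ext x
  simp only [Set.mem_insert_iff, Set.mem_diff, Set.mem_singleton_iff]
  constructor
  · rintro (rfl | ⟨rfl | ⟨hxS, hxfk⟩, hxh⟩)
    · exact Or.inr ⟨hfkS, Ne.symm hhfk⟩
    · exact Or.inl rfl
    · exact Or.inr ⟨hxS, hxh⟩
  · rintro (rfl | ⟨hxS, hxh⟩)
    · exact Or.inr ⟨Or.inl rfl, Ne.symm hhe⟩
    · by_cases hxfk : x = fk
      · exact Or.inl hxfk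
      · exact Or.inr ⟨Or.inr ⟨hxS, hxfk⟩, hxh⟩

/-- The invariant carried while rotating the uncolored edge around its `F`-cycle. -/
def RotSt (G : Multigraph V E) (A F S : Set E) (c : E → ℕ) (u v : V) (e : E) (α β : ℕ)
    (k : ℕ) : Prop :=
  ∃ (y : ℕ → V) (f : ℕ → E) (ck : E → ℕ),
    y 0 = u ∧ y 1 = v ∧ f 0 = e ∧
    (∀ j, 1 ≤ j → j ≤ k → f j ∈ S ∧ f j ∈ F) ∧
    (∀ j, j ≤ k → G.inc (f j) = s(y j, y (j+1))) ∧
    (∀ j, 1 ≤ j → j ≤ k → c (f j) = if j % 2 = 1 then α else β) ∧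
    (∀ i j, i ≤ k → j ≤ k → y i = y j → i = j) ∧
    (∀ i j, i < j → j ≤ k → f i ≠ f j) ∧
    (∀ j, 2 ≤ j → j ≤ k → G.degOn S (y j) = 3) ∧
    G.IsLexMax A F 3 (insert e (S \ {f k})) ∧
    G.ProperOn (insert e (S \ {f k})) ck 3 ∧
    (∀ x, x ≠ e → (∀ j, j < k → x ≠ f j) → ck x = c x) ∧
    ck (f (k-1)) = (if k % 2 = 1 then α else β) ∧
    G.MissingAt (insert e (S \ {f k})) ck (if k % 2 = 1 then β else α) (y k)

section Rotation

variable {A F S : Set E} {c : E → ℕ} {e : E} {u v : V} {α β : ℕ}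

lemma rot_init (hlex : G.IsLexMax A F 3 S) (hFA : F ⊆ A)
    (hc : G.ProperOn S c 3) (heF : e ∈ F) (heS : e ∉ S) (hinc : G.inc e = s(u, v))
    (hα : α < 3) (hmu : G.MissingAt S c α u) (hmv : G.MissingAt S c β v) (hαβ : α ≠ β) :
    G.RotSt A F S c u v e α β 1 := by
  classical
  obtain ⟨f1, hf1S, hf1F, hf1v, hcf1⟩ := pin hlex hFA hc heF heS hinc hα hmu
  set y2 := Sym2.Mem.other hf1v with hy2
  have hincf1 : G.inc f1 = s(v, y2) := (Sym2.other_spec hf1v).symm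
  obtain ⟨hlex1, hprop1⟩ :=
    rotate hlex hFA hc heF heS hinc hα hmu hf1S hf1F hf1v hcf1
  refine ⟨fun j => if j = 0 then u else if j = 1 then v else y2,
    fun j => if j = 0 then e else f1, Function.update c e α, by simp, by simp, by simp,
    ?_, ?_, ?_, ?_, ?_, ?_, ?_, ?_, ?_, ?_, ?_⟩
  · intro j h1 h2
    have : j = 1 := by omega
    subst this
    simpa using ⟨hf1S, hf1F⟩
  · intro j hj
    interval_cases j
    · simpa using hinc
    · simpa using hincf1
  · intro j h1 h2
    have : j = 1 := by omega
    subst this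
    simpa using hcf1
  · intro i j hi hj hij
    have hne : u ≠ v := ne_of_inc hinc
    interval_cases i <;> interval_cases j
    · rfl
    · exact absurd (show u = v by simpa using hij) hne
    · exact absurd (show u = v by simpa using hij.symm) hne
    · rfl
  · intro i j hij hj
    have hij01 : i = 0 ∧ j = 1 := by omega
    obtain ⟨rfl, rfl⟩ := hij01
    norm_num
    intro h
    apply heS
    rw [h]
    exact hf1S
  · intro j h1 h2
    omega
  · simpa using hlex1
  · simpa using hprop1
  · intro x hxe hfj
    exact Function.update_of_ne hxe _ _
  · simpa using Function.update_self e α c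
  · -- β is missing at v in the rotated coloring
    simp only [if_pos rfl, Nat.one_mod]
    intro x hx hxv
    rcases hx with rfl | hx
    · rw [Function.update_self]
      exact Ne.symm (Ne.symm hαβ)
    · rw [Function.update_of_ne (fun h => heS (by rw [← h]; exact hx.1)) _ _]
      exact hmv x hx.1 hxv

end Rotation


section RotationStep

variable {A F S : Set E} {c : E → ℕ} {e : E} {u v : V} {α β : ℕ}

lemma rot_step (hlex : G.IsLexMax A F 3 S) (hFA : F ⊆ A) (hdegA : ∀ w, G.degOn A w ≤ 3)
    (hFdeg : ∀ w : V, {f ∈ F | w ∈ G.inc f}.ncard ≤ 2)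
    (hc : G.ProperOn S c 3) (heF : e ∈ F) (heS : e ∉ S) (hinc : G.inc e = s(u, v))
    (hα : α < 3) (hβ : β < 3) (hαβ : α ≠ β)
    (hmu : G.MissingAt S c α u) (hmv : G.MissingAt S c β v)
    (hdegu : G.degOn S u = 2) (hdegv : G.degOn S v = 2)
    {k : ℕ} (hk : 1 ≤ k) (hSt : G.RotSt A F S c u v e α β k) :
    G.RotSt A F S c u v e α β (k + 1) := by
  classical
  obtain ⟨y, f, ck, hy0, hy1, hf0, hfSF, hincs, hcol, hyinj, hfinj, hdeg, hlexk, hck,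
    hagree, hckprev, hmiss⟩ := hSt
  set μ : ℕ := if k % 2 = 1 then β else α with hμ
  set ν : ℕ := if k % 2 = 1 then α else β with hν
  have hμ3 : μ < 3 := by rw [hμ]; split <;> omega
  have hν3 : ν < 3 := by rw [hν]; split <;> omega
  have hμν : μ ≠ ν := by rw [hμ, hν]; split <;> omega
  have hfkS : f k ∈ S := (hfSF k hk le_rfl).1
  have hfkF : f k ∈ F := (hfSF k hk le_rfl).2
  have hfke : f k ≠ e := by
    rw [← hf0]
    exact (hfinj 0 k hk le_rfl).symm
  have hfkSk : f k ∉ insert e (S \ {f k}) := by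
    rintro (h | h)
    · exact hfke h
    · exact h.2 rfl
  have hinck : G.inc (f k) = s(y k, y (k+1)) := hincs k le_rfl
  have hykinc : y k ∈ G.inc (f k) := by rw [hinck]; exact Sym2.mem_mk_left _ _
  have hyk1inc : y (k+1) ∈ G.inc (f k) := by rw [hinck]; exact Sym2.mem_mk_right _ _
  have hSkA : insert e (S \ {f k}) ⊆ A := hlexk.1
  -- the previous edge f (k-1)
  have hfk1F : f (k-1) ∈ F := by
    rcases Nat.eq_or_lt_of_le hk with h | h
    · rw [show k - 1 = 0 by omega, hf0]
      exact heF
    · exact (hfSF (k-1) (by omega) (by omega)).2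
  have hfk1inc : y k ∈ G.inc (f (k-1)) := by
    have := hincs (k-1) (by omega)
    rw [show k - 1 + 1 = k by omega] at this
    rw [this]
    exact Sym2.mem_mk_right _ _
  have hfk1ne : f (k-1) ≠ f k := hfinj (k-1) k (by omega) le_rfl
  have hmissk : G.MissingAt (insert e (S \ {f k})) ck μ (y k) := hmiss
  by_cases hclose : ∃ j, j ≤ k ∧ y (k + 1) = y j
  · -- the cycle closes (or we revisit a vertex)
    obtain ⟨j, hj, hyj⟩ := hclose
    rcases Nat.eq_zero_or_pos j with rfl | hjpos
    · -- closure at y 0 : endgame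
      exfalso
      have hfku : y 0 ∈ G.inc (f k) := by rw [← hyj]; exact hyk1inc
      have hckα : c (f k) ≠ α := by
        rw [← hy0] at hmu
        exact hmu (f k) hfkS hfku
      have hkeven : k % 2 = 0 := by
        have := hcol k hk le_rfl
        by_cases h : k % 2 = 1
        · rw [if_pos h] at this
          exact absurd this hckα
        · omega
      have hk2 : 2 ≤ k := by
        rcases Nat.eq_or_lt_of_le hk with h | h
        · omega
        · omega
      refine endgame (nn := k + 1) (y := y) (f := f) hlex hFA hFdeg hc
        ⟨(k+1)/2, by omega⟩ (by omega) hα hβ hαβ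
        (by rw [hf0]; exact heF) (by rw [hf0]; exact heS)
        (fun j h1 h2 => (hfSF j h1 (by omega)).1)
        (fun j hjk => ?_) (fun j hjk => ?_)
        (fun j h1 h2 => hcol j h1 (by omega))
        (fun i j hi hj h => hyinj i j (by omega) (by omega) h)
        (fun i j hi hj h => ?_)
        (fun j h1 h2 => hdeg j h1 (by omega))
        (by rw [hy0]; exact hdegu) (by rw [hy1]; exact hdegv)
        (by rw [hy0]; exact hmu) (by rw [hy1]; exact hmv)
      · -- f j ∈ F for j < k+1
        rcases Nat.eq_zero_or_pos j with rfl | h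
        · rw [hf0]; exact heF
        · exact (hfSF j h (by omega)).2
      · -- incidence with wrap-around
        by_cases hlt : j + 1 < k + 1
        · rw [if_pos hlt]
          exact hincs j (by omega)
        · rw [if_neg hlt]
          have : j = k := by omega
          subst this
          rw [hinck, hyj]
      · -- injectivity of f
        rcases Nat.lt_trichotomy i j with h | h | h
        · exact absurd ‹f i = f j› (hfinj i j h (by omega))
        · exact h
        · exact absurd ‹f i = f j›.symm (hfinj j i h (by omega))
    · -- a middle vertex is revisited : contradicts the F-degree bound
      exfalso
      have hjk : j ≠ k := by
        intro h
        subst h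
        exact (ne_of_inc hinck).symm hyj
      have hjltk : j < k := by omega
      -- three distinct F-edges at y j
      have e1 : f (j-1) ∈ {x ∈ F | y j ∈ G.inc x} := by
        refine ⟨?_, ?_⟩
        · rcases Nat.eq_or_lt_of_le hjpos with h | h
          · rw [show j - 1 = 0 by omega, hf0]
            exact heF
          · exact (hfSF (j-1) (by omega) (by omega)).2
        · have := hincs (j-1) (by omega)
          rw [show j - 1 + 1 = j by omega] at this
          rw [this]
          exact Sym2.mem_mk_right _ _
      have e2 : f j ∈ {x ∈ F | y j ∈ G.inc x} := by
        refine ⟨(hfSF j hjpos (by omega)).2, ?_⟩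
        rw [hincs j (by omega)]
        exact Sym2.mem_mk_left _ _
      have e3 : f k ∈ {x ∈ F | y j ∈ G.inc x} := ⟨hfkF, by rw [← hyj]; exact hyk1inc⟩
      have hne12 : f (j-1) ≠ f j := hfinj (j-1) j (by omega) (by omega)
      have hne13 : f (j-1) ≠ f k := hfinj (j-1) k (by omega) le_rfl
      have hne23 : f j ≠ f k := hfinj j k hjltk le_rfl
      have hsub : ({f (j-1), f j, f k} : Set E) ⊆ {x ∈ F | y j ∈ G.inc x} := by
        intro z hz
        rcases hz with rfl | rfl | rfl
        · exact e1
        · exact e2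
        · exact e3
      have h3 : ({f (j-1), f j, f k} : Set E).ncard = 3 := by
        rw [Set.ncard_eq_three]
        exact ⟨_, _, _, hne12, hne13, hne23, rfl⟩
      have := Set.ncard_le_ncard hsub (Set.toFinite _)
      have := hFdeg (y j)
      omega
  · -- fresh vertex : the rotation continues
    push_neg at hclose
    have hnotince : y (k+1) ∉ G.inc e := by
      intro h
      rw [hinc, Sym2.mem_iff] at h
      rcases h with h | h
      · exact hclose 0 (by omega) (h.trans hy0.symm)
      · exact hclose 1 hk (h.trans hy1.symm)
    -- a missing color at the far end
    have hdegSk : G.degOn (insert e (S \ {f k})) (y (k+1)) < 3 :=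
      degOn_lt_of_uncolored hSkA (hlex.1 hfkS) hfkSk hyk1inc (hdegA _)
    obtain ⟨ε, hε3, hmissε⟩ := exists_missing hck hdegSk
    -- pin from the far side : ε must be the color of f (k-1)
    have hpinfar : ∀ ε', ε' < 3 → G.MissingAt (insert e (S \ {f k})) ck ε' (y (k+1)) →
        ε' = ν := by
      intro ε' hε' hm
      obtain ⟨h', hh'Sk, hh'F, hh'yk, hckh'⟩ := pin hlexk hFA hck hfkF hfkSk
        (hinck.trans (Sym2.eq_swap)) hε' hm
      have hh'fk : h' ≠ f k := fun h => hfkSk (h ▸ hh'Sk)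
      have : h' = f (k-1) := by
        rcases mem_pair_of_ncard_le_two (M := {x ∈ F | y k ∈ G.inc x})
          ⟨hfk1F, hfk1inc⟩ ⟨hfkF, hykinc⟩ hfk1ne (hFdeg (y k)) ⟨hh'F, hh'yk⟩ with h | h
        · exact h
        · exact absurd h hh'fk
      rw [← hckh', this, hckprev]
    have hεν : ε = ν := hpinfar ε hε3 hmissε
    -- the far end has full degree in S
    have hdegyk1 : G.degOn S (y (k+1)) = 3 := by
      have huniq := degOn_of_unique_missing hck hν3 (hεν ▸ hmissε) hpinfar
      have heq := eAt_swap_not_inc (G := G) (S := S) (fk := f k) hnotince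
      have hmem : f k ∈ G.eAt S (y (k+1)) := ⟨hfkS, hyk1inc⟩
      have h1 : (G.eAt S (y (k+1)) \ {f k}).ncard = (G.eAt S (y (k+1))).ncard - 1 :=
        Set.ncard_diff_singleton_of_mem hmem
      have h2 : 1 ≤ (G.eAt S (y (k+1))).ncard := by
        have : ({f k} : Set E) ⊆ G.eAt S (y (k+1)) := Set.singleton_subset_iff.2 hmem
        simpa using Set.ncard_le_ncard this (Set.toFinite _)
      rw [degOn_def] at huniq ⊢
      rw [heq, h1] at huniq
      omega
    -- pin from the near side : the new edge h
    obtain ⟨h, hhSk, hhF, hhyk1, hckh⟩ := pin hlexk hFA hck hfkF hfkSk hinck hμ3 hmissk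
    have hhe : h ≠ e := by
      intro heq
      exact hnotince (heq ▸ hhyk1)
    have hhfj : ∀ j, j ≤ k → h ≠ f j := by
      intro j hj heq
      rcases Nat.eq_or_lt_of_le hj with rfl | hjlt
      · exact hfkSk (heq ▸ hhSk)
      · have : y (k+1) ∈ G.inc (f j) := heq ▸ hhyk1
        rw [hincs j (by omega), Sym2.mem_iff] at this
        rcases this with h1 | h1
        · exact hclose j (by omega) h1
        · exact hclose (j+1) (by omega) h1
    have hhS : h ∈ S := by
      rcases hhSk with h1 | h1
      · exact absurd h1 hhe
      · exact h1.1
    have hch : c h = μ := by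
      rw [← hagree h hhe (fun j hj => hhfj j (by omega)), hckh]
    set o := Sym2.Mem.other hhyk1 with ho
    have hinch : G.inc h = s(y (k+1), o) := (Sym2.other_spec hhyk1).symm
    obtain ⟨hlexk1, hpropk1⟩ :=
      rotate hlexk hFA hck hfkF hfkSk hinck hμ3 hmissk hhSk hhF hhyk1 hckh
    have hseteq : insert (f k) ((insert e (S \ {f k})) \ {h}) = insert e (S \ {h}) :=
      swap_set_eq hfkS hhe (fun heq => hhfj k le_rfl heq) heS
    rw [hseteq] at hlexk1 hpropk1
    -- assemble the new state
    set y' : ℕ → V := fun j => if j = k + 2 then o else y j with hy'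
    set f' : ℕ → E := fun j => if j = k + 1 then h else f j with hf'
    have hy'lo : ∀ j, j ≠ k + 2 → y' j = y j := by
      intro j hj
      simp only [hy', if_neg hj]
    have hy'hi : y' (k + 2) = o := by simp only [hy', if_pos rfl]
    have hf'lo : ∀ j, j ≠ k + 1 → f' j = f j := by
      intro j hj
      simp only [hf', if_neg hj]
    have hf'hi : f' (k + 1) = h := by simp only [hf', if_pos rfl]
    have hparity : (if (k + 1) % 2 = 1 then α else β) = μ := by
      rw [hμ]
      rcases Nat.mod_two_eq_zero_or_one k with hpar | hpar
      · rw [if_pos (by omega), if_neg (by omega)]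
      · rw [if_neg (by omega), if_pos (by omega)]
    refine ⟨y', f', Function.update ck (f k) μ, ?_, ?_, ?_, ?_, ?_, ?_, ?_, ?_, ?_, ?_,
      ?_, ?_, ?_, ?_⟩
    · rw [hy'lo 0 (by omega)]; exact hy0
    · rw [hy'lo 1 (by omega)]; exact hy1
    · rw [hf'lo 0 (by omega)]; exact hf0
    · intro j h1 h2
      by_cases hj : j = k + 1
      · rw [hj, hf'hi]
        exact ⟨hhS, hhF⟩
      · rw [hf'lo j hj]
        exact hfSF j h1 (by omega)
    · intro j hj
      by_cases hjeq : j = k + 1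
      · subst hjeq
        rw [hf'hi, hy'lo (k+1) (by omega), hy'hi]
        exact hinch
      · rw [hf'lo j hjeq, hy'lo j (by omega), hy'lo (j+1) (by omega)]
        exact hincs j (by omega)
    · intro j h1 h2
      by_cases hj : j = k + 1
      · subst hj
        rw [hf'hi, hch, hparity]
      · rw [hf'lo j hj]
        exact hcol j h1 (by omega)
    · intro i j hi hj hij
      by_cases hik : i = k + 1 <;> by_cases hjk : j = k + 1
      · omega
      · subst hik
        rw [hy'lo (k+1) (by omega), hy'lo j (by omega)] at hij
        exact absurd hij (hclose j (by omega))
      · subst hjk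
        rw [hy'lo i (by omega), hy'lo (k+1) (by omega)] at hij
        exact absurd hij.symm (hclose i (by omega))
      · rw [hy'lo i (by omega), hy'lo j (by omega)] at hij
        exact hyinj i j (by omega) (by omega) hij
    · intro i j hij hj
      by_cases hjk : j = k + 1
      · subst hjk
        rw [hf'lo i (by omega), hf'hi]
        exact fun heq => (hhfj i (by omega)) heq.symm
      · rw [hf'lo i (by omega), hf'lo j hjk]
        exact hfinj i j hij (by omega)
    · intro j h1 h2
      by_cases hj : j = k + 1
      · subst hj
        rw [hy'lo (k+1) (by omega)]
        exact hdegyk1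
      · rw [hy'lo j (by omega)]
        exact hdeg j h1 (by omega)
    · rw [hf'hi]
      exact hlexk1
    · rw [hf'hi]
      exact hpropk1
    · intro x hxe hxf
      have hxfk : x ≠ f k := by
        have := hxf k (by omega)
        rwa [hf'lo k (by omega)] at this
      rw [Function.update_of_ne hxfk]
      exact hagree x hxe (fun j hj => by
        have := hxf j (by omega)
        rwa [hf'lo j (by omega)] at this)
    · rw [show k + 1 - 1 = k by omega, hf'lo k (by omega), Function.update_self, hparity]
    · -- the missing color at the new position
      rw [hf'hi, hy'lo (k+1) (by omega)]
      have hgoalν : (if (k+1) % 2 = 1 then β else α) = ν := by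
        rw [hν]
        rcases Nat.mod_two_eq_zero_or_one k with hpar | hpar
        · rw [if_pos (by omega), if_neg (by omega)]
        · rw [if_neg (by omega), if_pos (by omega)]
      rw [hgoalν]
      intro x hx hxinc
      rcases hx with rfl | hx
      · exact absurd hxinc hnotince
      · by_cases hxfk : x = f k
        · subst hxfk
          rw [Function.update_self]
          exact hμν
        · rw [Function.update_of_ne hxfk]
          have hxSk : x ∈ insert e (S \ {f k}) := Set.mem_insert_of_mem _ ⟨hx.1, hxfk⟩
          have hmiss2 := hεν ▸ hmissε
          exact hmiss2 x hxSk hxinc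

end RotationStep


/-! ### The three-color theorem -/

lemma rotation {A F S : Set E} (hlex : G.IsLexMax A F 3 S) (hFA : F ⊆ A)
    (hdegA : ∀ w, G.degOn A w ≤ 3)
    (hFdeg : ∀ w : V, {f ∈ F | w ∈ G.inc f}.ncard ≤ 2)
    {e : E} (heF : e ∈ F) (heS : e ∉ S) : False := by
  classical
  obtain ⟨c, hc⟩ := hlex.2.1
  obtain ⟨⟨u, v⟩, hu⟩ := (G.inc e).exists_rep
  have hinc : G.inc e = s(u, v) := hu.symm
  have huinc : u ∈ G.inc e := by rw [hinc]; exact Sym2.mem_mk_left _ _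
  have hvinc : v ∈ G.inc e := by rw [hinc]; exact Sym2.mem_mk_right _ _
  have hdegSu : G.degOn S u < 3 := degOn_lt_of_uncolored hlex.1 (hFA heF) heS huinc (hdegA u)
  have hdegSv : G.degOn S v < 3 := degOn_lt_of_uncolored hlex.1 (hFA heF) heS hvinc (hdegA v)
  obtain ⟨α, hα, hmu⟩ := exists_missing hc hdegSu
  obtain ⟨β, hβ, hmv⟩ := exists_missing hc hdegSv
  have hαβ : α ≠ β := by
    rintro rfl
    exact no_common_missing hlex hc (hFA heF) heS hinc hα hmu hmv
  have huuniq : ∀ δ', δ' < 3 → G.MissingAt S c δ' u → δ' = α := fun δ' h1 h2 =>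
    pin_unique hlex hFA hFdeg hc heF heS hinc h1 hα h2 hmu
  have hvuniq : ∀ δ', δ' < 3 → G.MissingAt S c δ' v → δ' = β := fun δ' h1 h2 =>
    pin_unique hlex hFA hFdeg hc heF heS (hinc.trans Sym2.eq_swap) h1 hβ h2 hmv
  have hdegu : G.degOn S u = 2 := by
    have := degOn_of_unique_missing hc hα hmu huuniq
    omega
  have hdegv : G.degOn S v = 2 := by
    have := degOn_of_unique_missing hc hβ hmv hvuniq
    omega
  have hall : ∀ k, G.RotSt A F S c u v e α β (k + 1) := by
    intro k
    induction k with
    | zero => exact rot_init hlex hFA hc heF heS hinc hα hmu hmv hαβ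
    | succ k ih =>
      exact rot_step hlex hFA hdegA hFdeg hc heF heS hinc hα hβ hαβ hmu hmv hdegu hdegv
        (by omega) ih
  obtain ⟨y, f, ck, -, -, -, -, -, -, hyinj, -, -, -, -, -, -, -⟩ := hall (Fintype.card V)
  have hinj : Function.Injective (fun i : Fin (Fintype.card V + 2) => y i) := by
    intro i j hij
    exact Fin.ext (hyinj i j (Nat.lt_succ_iff.mp i.isLt) (Nat.lt_succ_iff.mp j.isLt) hij)
  have hcard := Fintype.card_le_of_injective _ hinj
  rw [Fintype.card_fin] at hcard
  omega

lemma T3 {A F : Set E} (hdegA : ∀ w, G.degOn A w ≤ 3) (hFA : F ⊆ A)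
    (hFdeg : ∀ w : V, {f ∈ F | w ∈ G.inc f}.ncard ≤ 2) :
    ∃ S, G.IsLexMax A F 3 S ∧ F ⊆ S := by
  obtain ⟨S, hS⟩ := exists_lexMax (G := G) A F 3
  refine ⟨S, hS, fun e heF => ?_⟩
  by_contra heS
  exact rotation hS hFA hdegA hFdeg heF heS

/-! ### The general theorem, by color-class descent -/

lemma T_star {n : ℕ} (hn : 3 ≤ n) {A F : Set E} (hdegA : ∀ w, G.degOn A w ≤ n)
    (hFA : F ⊆ A) (hFdeg : ∀ w : V, {f ∈ F | w ∈ G.inc f}.ncard ≤ 2) :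
    ∃ S, G.IsLexMax A F n S ∧ F ⊆ S := by
  classical
  obtain ⟨S, hS⟩ := exists_lexMax (G := G) A F n
  refine ⟨S, hS, fun e heF => ?_⟩
  by_contra heS
  obtain ⟨c, hc⟩ := hS.2.1
  obtain ⟨⟨u, v⟩, hu⟩ := (G.inc e).exists_rep
  have hinc : G.inc e = s(u, v) := hu.symm
  have huinc : u ∈ G.inc e := by rw [hinc]; exact Sym2.mem_mk_left _ _
  have hvinc : v ∈ G.inc e := by rw [hinc]; exact Sym2.mem_mk_right _ _
  have hdegSu : G.degOn S u < n := degOn_lt_of_uncolored hS.1 (hFA heF) heS huinc (hdegA u)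
  have hdegSv : G.degOn S v < n := degOn_lt_of_uncolored hS.1 (hFA heF) heS hvinc (hdegA v)
  obtain ⟨α, hα, hmu⟩ := exists_missing hc hdegSu
  obtain ⟨β, hβ, hmv⟩ := exists_missing hc hdegSv
  have hαβ : α ≠ β := by
    rintro rfl
    exact no_common_missing hS hc (hFA heF) heS hinc hα hmu hmv
  -- a third color
  obtain ⟨γ, hγ, hγα, hγβ⟩ : ∃ γ, γ < n ∧ γ ≠ α ∧ γ ≠ β := by
    by_cases h0 : (0 : ℕ) = α ∨ (0 : ℕ) = β
    · by_cases h1 : (1 : ℕ) = α ∨ (1 : ℕ) = β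
      · refine ⟨2, by omega, ?_, ?_⟩ <;> omega
      · push_neg at h1
        exact ⟨1, by omega, h1.1, h1.2⟩
    · push_neg at h0
      exact ⟨0, by omega, h0.1, h0.2⟩
  set M : Set E := {x | x ∈ S ∧ c x ≠ α ∧ c x ≠ β ∧ c x ≠ γ} with hM
  have hMS : M ⊆ S := fun x hx => hx.1
  have heM : e ∉ M := fun hx => heS hx.1
  set W' : Set E := insert e (S \ M) with hW'
  have heW' : e ∈ W' := Set.mem_insert _ _
  have hW'A : W' ⊆ A := Set.insert_subset (hFA heF) (Set.diff_subset.trans hS.1)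
  have hW'M : ∀ x ∈ W', x ∉ M := by
    rintro x (rfl | hx)
    · exact heM
    · exact hx.2
  -- counting helper
  have key : ∀ (w : V) (T : Set E), T ⊆ G.eAt S w → ∀ (Y : Set ℕ), Y.Finite →
      (∀ x ∈ T, c x ∈ Y) → T.ncard ≤ Y.ncard := by
    intro w T hT Y hYfin hY
    calc T.ncard = (c '' T).ncard :=
          (Set.ncard_image_of_injOn ((injOn_eAt hc w).mono hT)).symm
      _ ≤ Y.ncard := Set.ncard_le_ncard
          (by rintro _ ⟨x, hx, rfl⟩; exact hY x hx) hYfin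
  have hcard3 : ({α, β, γ} : Set ℕ).ncard ≤ 3 := by
    apply le_trans (Set.ncard_insert_le _ _)
    have := Set.ncard_insert_le β ({γ} : Set ℕ)
    simp only [Set.ncard_singleton] at this
    omega
  have hcard2 : ∀ (a b : ℕ), ({a, b} : Set ℕ).ncard ≤ 2 := by
    intro a b
    have := Set.ncard_insert_le a ({b} : Set ℕ)
    simp only [Set.ncard_singleton] at this
    omega
  -- degrees in W' are at most three
  have hdegW' : ∀ w, G.degOn W' w ≤ 3 := by
    intro w
    have hTsub : G.eAt (S \ M) w ⊆ G.eAt S w := eAt_mono Set.diff_subset w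
    by_cases hw : w ∈ G.inc e
    · -- w is u or v : one of α, β is missing at w
      have hmissw : (∀ x ∈ G.eAt S w, c x ≠ α) ∨ (∀ x ∈ G.eAt S w, c x ≠ β) := by
        rw [hinc, Sym2.mem_iff] at hw
        rcases hw with rfl | rfl
        · exact Or.inl (fun x hx => hmu x hx.1 hx.2)
        · exact Or.inr (fun x hx => hmv x hx.1 hx.2)
      have hb : (G.eAt (S \ M) w).ncard ≤ 2 := by
        rcases hmissw with hmw | hmw
        · refine le_trans (key w _ hTsub {β, γ}
            ((Set.finite_singleton γ).insert β) ?_) (hcard2 β γ)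
          intro x hx
          have hxM := hx.1.2
          rw [hM] at hxM
          simp only [Set.mem_setOf_eq, not_and, not_not] at hxM
          have hcx := hmw x (hTsub hx)
          by_cases hcb : c x = β
          · exact Or.inl hcb
          · by_cases hcg : c x = γ
            · exact Or.inr hcg
            · exact absurd (hxM hx.1.1 (fun h => hcx h) hcb) hcg
        · refine le_trans (key w _ hTsub {α, γ}
            ((Set.finite_singleton γ).insert α) ?_) (hcard2 α γ)
          intro x hx
          have hxM := hx.1.2
          rw [hM] at hxM
          simp only [Set.mem_setOf_eq, not_and, not_not] at hxM
          have hcx := hmw x (hTsub hx)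
          by_cases hca : c x = α
          · exact Or.inl hca
          · by_cases hcg : c x = γ
            · exact Or.inr hcg
            · exact absurd (hxM hx.1.1 hca (fun h => hcx h)) hcg
      have hsub : G.eAt W' w ⊆ insert e (G.eAt (S \ M) w) := by
        rintro x ⟨rfl | hx, hxw⟩
        · exact Set.mem_insert _ _
        · exact Set.mem_insert_of_mem _ ⟨hx, hxw⟩
      have h1 := Set.ncard_le_ncard hsub (Set.toFinite _)
      have h2 := Set.ncard_insert_le e (G.eAt (S \ M) w)
      rw [degOn_def]
      omega
    · -- w is not an endpoint of e
      have hsub : G.eAt W' w ⊆ G.eAt (S \ M) w := by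
        rintro x ⟨rfl | hx, hxw⟩
        · exact absurd hxw hw
        · exact ⟨hx, hxw⟩
      have hb : (G.eAt (S \ M) w).ncard ≤ 3 := by
        refine le_trans (key w _ hTsub {α, β, γ}
          (((Set.finite_singleton γ).insert β).insert α) ?_) hcard3
        intro x hx
        have hxM := hx.1.2
        rw [hM] at hxM
        simp only [Set.mem_setOf_eq, not_and, not_not] at hxM
        by_cases hca : c x = α
        · exact Or.inl hca
        · by_cases hcb : c x = β
          · exact Or.inr (Or.inl hcb)
          · exact Or.inr (Or.inr (hxM hx.1.1 hca hcb))
      have h1 := Set.ncard_le_ncard hsub (Set.toFinite _)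
      rw [degOn_def]
      omega
  -- apply the three-color theorem inside W'
  set F' : Set E := F ∩ W' with hF'
  have hF'W' : F' ⊆ W' := Set.inter_subset_right
  have hF'deg : ∀ w : V, {f ∈ F' | w ∈ G.inc f}.ncard ≤ 2 := by
    intro w
    refine le_trans (Set.ncard_le_ncard ?_ (Set.toFinite _)) (hFdeg w)
    exact fun x hx => ⟨hx.1.1, hx.2⟩
  obtain ⟨S', hS', hF'S'⟩ := T3 (G := G) hdegW' hF'W' hF'deg
  have heF' : e ∈ F' := ⟨heF, heW'⟩
  have heS' : e ∈ S' := hF'S' heF'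
  -- combining a three-coloring of a subset of W' with the removed color classes
  set ρ : ℕ → ℕ := fun m => if m = 0 then α else if m = 1 then β else γ with hρ
  have hρlt : ∀ m, ρ m < n := by
    intro m
    simp only [hρ]
    split_ifs <;> omega
  have hρmem : ∀ m, ρ m = α ∨ ρ m = β ∨ ρ m = γ := by
    intro m
    simp only [hρ]
    split_ifs <;> simp
  have hρinj : ∀ a b, a < 3 → b < 3 → ρ a = ρ b → a = b := by
    intro a b ha hb hab
    simp only [hρ] at hab
    split_ifs at hab <;> omega
  have hcombine : ∀ T', T' ⊆ W' → G.ColorableOn T' 3 → G.ColorableOn (T' ∪ M) n := by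
    intro T' hT'W' hTcol
    obtain ⟨c', hc'⟩ := hTcol
    set cbig : E → ℕ := fun x => if x ∈ M then c x else ρ (c' x) with hcbig
    have hcbigM : ∀ x, x ∈ M → cbig x = c x := fun x hx => by
      simp only [hcbig, if_pos hx]
    have hcbigT : ∀ x, x ∉ M → cbig x = ρ (c' x) := fun x hx => by
      simp only [hcbig, if_neg hx]
    refine ⟨cbig, ?_, ?_⟩
    · intro x hx
      by_cases hxM : x ∈ M
      · rw [hcbigM x hxM]
        exact hc.1 x (hMS hxM)
      · rw [hcbigT x hxM]
        exact hρlt _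
    · intro x hx y hy hxy hshare
      rcases hx with hx | hx <;> rcases hy with hy | hy
      · -- both in T'
        rw [hcbigT x (hW'M x (hT'W' hx)), hcbigT y (hW'M y (hT'W' hy))]
        intro h
        exact hc'.2 x hx y hy hxy hshare
          (hρinj _ _ (hc'.1 x hx) (hc'.1 y hy) h)
      · -- x ∈ T', y ∈ M
        rw [hcbigT x (hW'M x (hT'W' hx)), hcbigM y hy]
        intro h
        rcases hρmem (c' x) with h' | h' | h'
        · exact hy.2.1 (by rw [← h, h'])
        · exact hy.2.2.1 (by rw [← h, h'])
        · exact hy.2.2.2 (by rw [← h, h'])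
      · rw [hcbigM x hx, hcbigT y (hW'M y (hT'W' hy))]
        intro h
        rcases hρmem (c' y) with h' | h' | h'
        · exact hx.2.1 (by rw [h, h'])
        · exact hx.2.2.1 (by rw [h, h'])
        · exact hx.2.2.2 (by rw [h, h'])
      · rw [hcbigM x hx, hcbigM y hy]
        exact hc.2 x (hMS hx) y (hMS hy) hxy hshare
  -- a three-coloring of W' \ {e} exists
  have hWminus : G.ColorableOn (W' \ {e}) 3 := by
    set cw : E → ℕ := fun x => if c x = α then 0 else if c x = β then 1 else 2 with hcwdef
    have hcw : ∀ x, cw x = if c x = α then 0 else if c x = β then 1 else 2 := fun x => by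
      simp only [hcwdef]
    refine ⟨cw, ?_, ?_⟩
    · intro x hx
      rw [hcw]
      split_ifs <;> omega
    · intro x hx y hy hxy hshare
      have hxS : x ∈ S \ M := by
        rcases hx.1 with rfl | h
        · exact absurd rfl hx.2
        · exact h
      have hyS : y ∈ S \ M := by
        rcases hy.1 with rfl | h
        · exact absurd rfl hy.2
        · exact h
      have hcc : c x ≠ c y := hc.2 x hxS.1 y hyS.1 hxy hshare
      have hxγ : c x = α ∨ c x = β ∨ c x = γ := by
        have hxM := hxS.2
        rw [hM] at hxM
        simp only [Set.mem_setOf_eq, not_and, not_not] at hxM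
        by_cases hca : c x = α
        · exact Or.inl hca
        · by_cases hcb : c x = β
          · exact Or.inr (Or.inl hcb)
          · exact Or.inr (Or.inr (hxM hxS.1 hca hcb))
      have hyγ : c y = α ∨ c y = β ∨ c y = γ := by
        have hyM := hyS.2
        rw [hM] at hyM
        simp only [Set.mem_setOf_eq, not_and, not_not] at hyM
        by_cases hca : c y = α
        · exact Or.inl hca
        · by_cases hcb : c y = β
          · exact Or.inr (Or.inl hcb)
          · exact Or.inr (Or.inr (hyM hyS.1 hca hcb))
      rcases hxγ with h1 | h1 | h1 <;> rcases hyγ with h2 | h2 | h2 <;>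
        rw [hcw, hcw, h1, h2] <;> split_ifs <;> omega
  -- cardinalities
  have hW'card : (W' \ {e}).ncard = W'.ncard - 1 :=
    Set.ncard_diff_singleton_of_mem heW'
  have hW'pos : 1 ≤ W'.ncard := by
    have : ({e} : Set E) ⊆ W' := Set.singleton_subset_iff.2 heW'
    simpa using Set.ncard_le_ncard this (Set.toFinite _)
  have hS'le : S'.ncard ≤ W'.ncard := Set.ncard_le_ncard hS'.1 (Set.toFinite _)
  have hS'ge : W'.ncard - 1 ≤ S'.ncard := by
    have := (hS'.2.2 (W' \ {e}) Set.diff_subset hWminus).1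
    omega
  have hMdisj : ∀ x ∈ W', x ∈ M → False := fun x h1 h2 => hW'M x h1 h2
  have hMcard : (S \ M).ncard = S.ncard - M.ncard := Set.ncard_diff hMS (Set.toFinite _)
  have hMle : M.ncard ≤ S.ncard := Set.ncard_le_ncard hMS (Set.toFinite _)
  have hW'val : W'.ncard = S.ncard - M.ncard + 1 := by
    rw [hW', Set.ncard_insert_of_notMem (fun h => heS h.1) (Set.toFinite _), hMcard]
  rcases Nat.lt_or_ge S'.ncard W'.ncard with hlt | hge
  · -- S' misses exactly one edge x' of W'
    have hS'card : S'.ncard = W'.ncard - 1 := by omega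
    have hdiff : (W' \ S').ncard = 1 := by
      rw [Set.ncard_diff hS'.1 (Set.toFinite _)]
      omega
    obtain ⟨x', hx'⟩ := Set.ncard_eq_one.1 hdiff
    have hx'mem : x' ∈ W' \ S' := by rw [hx']; exact rfl
    have hx'e : x' ≠ e := fun h => hx'mem.2 (h ▸ heS')
    have hx'F : x' ∉ F := fun h => hx'mem.2 (hF'S' ⟨h, hx'mem.1⟩)
    have hS'W' : ∀ z ∈ W', z ≠ x' → z ∈ S' := by
      intro z hz hzx
      by_contra hzS'
      have : z ∈ W' \ S' := ⟨hz, hzS'⟩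
      rw [hx'] at this
      exact hzx this
    -- the improved set
    have hcolS'' := hcombine S' hS'.1 hS'.2.1
    have hS''A : S' ∪ M ⊆ A := Set.union_subset (hS'.1.trans hW'A) (hMS.trans hS.1)
    have hdisjS'M : Disjoint S' M := by
      rw [Set.disjoint_left]
      exact fun z hz => hW'M z (hS'.1 hz)
    have hS''card : (S' ∪ M).ncard = S.ncard := by
      rw [Set.ncard_union_eq hdisjS'M (Set.toFinite _) (Set.toFinite _)]
      omega
    have hlexS'' := hS.2.2 (S' ∪ M) hS''A hcolS''
    have hsub2 : insert e (S ∩ F) ⊆ (S' ∪ M) ∩ F := by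
      rintro z (rfl | ⟨hzS, hzF⟩)
      · exact ⟨Or.inl heS', heF⟩
      · by_cases hzM : z ∈ M
        · exact ⟨Or.inr hzM, hzF⟩
        · refine ⟨Or.inl (hS'W' z (Set.mem_insert_of_mem _ ⟨hzS, hzM⟩) ?_), hzF⟩
          exact fun h => hx'F (h ▸ hzF)
    have h2 := Set.ncard_le_ncard hsub2 (Set.toFinite _)
    rw [Set.ncard_insert_of_notMem (fun h => heS h.1) (Set.toFinite _)] at h2
    have h3 := hlexS''.2 (by omega)
    omega
  · -- S' = W' : then S + e is n-colorable, contradiction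
    have hS'eq : S' = W' := Set.eq_of_subset_of_ncard_le hS'.1 (by omega) (Set.toFinite _)
    have hcolBig := hcombine W' (le_refl W') (hS'eq ▸ hS'.2.1)
    have hWM : W' ∪ M = insert e S := by
      rw [hW']
      ext z
      simp only [Set.mem_union, Set.mem_insert_iff, Set.mem_diff]
      constructor
      · rintro ((rfl | ⟨hz, _⟩) | hz)
        · exact Or.inl rfl
        · exact Or.inr hz
        · exact Or.inr (hMS hz)
      · rintro (rfl | hz)
        · exact Or.inl (Or.inl rfl)
        · by_cases hzM : z ∈ M
          · exact Or.inr hzM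
          · exact Or.inl (Or.inr ⟨hz, hzM⟩)
    rw [hWM] at hcolBig
    have := (hS.2.2 (insert e S) (Set.insert_subset (hFA heF) hS.1) hcolBig).1
    rw [Set.ncard_insert_of_notMem heS (Set.toFinite _)] at this
    omega



/-! ### Walk lemmas -/

lemma walk_start_mem_support : ∀ {a b : V} (q : G.Walk a b), a ∈ q.support
  | _, _, .nil v => by rw [Walk.support]; exact List.mem_singleton.2 rfl
  | _, _, .cons e h q => by rw [Walk.support]; exact List.mem_cons_self

lemma walk_end_mem_support : ∀ {a b : V} (q : G.Walk a b), b ∈ q.support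
  | _, _, .nil v => by rw [Walk.support]; exact List.mem_singleton.2 rfl
  | _, _, .cons e h q => by
    rw [Walk.support]
    exact List.mem_cons_of_mem _ (walk_end_mem_support q)

lemma mem_support_of_mem_edges :
    ∀ {a b : V} (q : G.Walk a b) (x : E), x ∈ q.edges → ∀ w, w ∈ G.inc x → w ∈ q.support
  | _, _, .nil v, x, hx, w, hw => by rw [Walk.edges] at hx; exact absurd hx List.not_mem_nil
  | _, _, .cons e h q, x, hx, w, hw => by
    rw [Walk.edges] at hx
    rw [Walk.support]
    rcases List.mem_cons.1 hx with rfl | hx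
    · rw [h, Sym2.mem_iff] at hw
      rcases hw with rfl | rfl
      · exact List.mem_cons_self
      · exact List.mem_cons_of_mem _ (walk_start_mem_support q)
    · exact List.mem_cons_of_mem _ (mem_support_of_mem_edges q x hx w hw)

lemma nodup_closed_walk_nil : ∀ {b : V} (q : G.Walk b b), q.support.Nodup → q.edges = []
  | _, .nil v, _ => rfl
  | b, .cons e h q, hnd => by
    rw [Walk.support] at hnd
    exact absurd ((List.nodup_cons.1 hnd).1 (walk_end_mem_support q)) (fun hF => hF)

lemma path_edge_count :
    ∀ {a b : V} (q : G.Walk a b), q.support.Nodup → ∀ w : V,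
      {x | x ∈ q.edges ∧ w ∈ G.inc x}.ncard ≤ 2 ∧
      (w = a → {x | x ∈ q.edges ∧ w ∈ G.inc x}.ncard ≤ 1) ∧
      (w = b → {x | x ∈ q.edges ∧ w ∈ G.inc x}.ncard ≤ 1) := by
  intro a b q
  induction q with
  | nil v =>
    intro hnd w
    have hempty : {x | x ∈ (Walk.nil (G := G) v).edges ∧ w ∈ G.inc x} = ∅ := by
      ext x
      rw [Walk.edges]
      simp
    rw [hempty]
    simp
  | @cons a c b e h q' ih =>
    intro hnd w
    rw [Walk.support] at hnd
    have hna : a ∉ q'.support := (List.nodup_cons.1 hnd).1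
    have hnd' : q'.support.Nodup := (List.nodup_cons.1 hnd).2
    obtain ⟨ih2, ihs, ihe⟩ := ih hnd' w
    set T : Set E := {x | x ∈ q'.edges ∧ w ∈ G.inc x} with hT
    have hSsub : {x | x ∈ (Walk.cons e h q').edges ∧ w ∈ G.inc x} ⊆ insert e T := by
      rintro x ⟨hx, hwx⟩
      rw [Walk.edges] at hx
      rcases List.mem_cons.1 hx with rfl | hx
      · exact Set.mem_insert _ _
      · exact Set.mem_insert_of_mem _ ⟨hx, hwx⟩
    have hSsub' : w ∉ G.inc e → {x | x ∈ (Walk.cons e h q').edges ∧ w ∈ G.inc x} ⊆ T := by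
      intro hwe
      rintro x ⟨hx, hwx⟩
      rw [Walk.edges] at hx
      rcases List.mem_cons.1 hx with rfl | hx
      · exact absurd hwx hwe
      · exact ⟨hx, hwx⟩
    have hTempty : w = a → T = ∅ := by
      rintro rfl
      ext x
      simp only [hT, Set.mem_setOf_eq, Set.mem_empty_iff_false, iff_false, not_and]
      intro hx hwx
      exact hna (mem_support_of_mem_edges q' x hx w hwx)
    have hac : a ≠ c := ne_of_inc h
    have hstart : {x | x ∈ (Walk.cons e h q').edges ∧ w ∈ G.inc x}.ncard ≤ 2 := by
      by_cases hwe : w ∈ G.inc e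
      · rw [h, Sym2.mem_iff] at hwe
        rcases hwe with rfl | rfl
        · have := hTempty rfl
          have hsub : {x | x ∈ (Walk.cons e h q').edges ∧ w ∈ G.inc x} ⊆ {e} := by
            intro x hx
            rcases hSsub hx with h1 | h1
            · exact h1
            · rw [this] at h1
              exact absurd h1 (Set.notMem_empty x)
          have := Set.ncard_le_ncard hsub (Set.toFinite _)
          simp only [Set.ncard_singleton] at this
          omega
        · have hT1 := ihs rfl
          have h1 := Set.ncard_le_ncard hSsub (Set.toFinite _)
          have h2 := Set.ncard_insert_le e T
          omega
      · have h1 := Set.ncard_le_ncard (hSsub' hwe) (Set.toFinite _)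
        omega
    refine ⟨hstart, ?_, ?_⟩
    · rintro rfl
      have hsub : {x | x ∈ (Walk.cons e h q').edges ∧ w ∈ G.inc x} ⊆ {e} := by
        intro x hx
        rcases hSsub hx with h1 | h1
        · exact h1
        · rw [hTempty rfl] at h1
          exact absurd h1 (Set.notMem_empty x)
      have := Set.ncard_le_ncard hsub (Set.toFinite _)
      simp only [Set.ncard_singleton] at this
      omega
    · intro hwb
      have hab : a ≠ b := by
        intro hf
        refine hna ?_
        rw [hf]
        exact walk_end_mem_support q'
      by_cases hwe : w ∈ G.inc e
      · rw [h, Sym2.mem_iff] at hwe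
        rcases hwe with hf | hf
        · exact absurd (hf.symm.trans hwb) hab
        · have hcb : c = b := hf.symm.trans hwb
          subst hcb
          have hq'nil : q'.edges = [] := nodup_closed_walk_nil q' hnd'
          have hTempty2 : T = ∅ := by
            ext x
            simp only [hT, hq'nil, Set.mem_setOf_eq, Set.mem_empty_iff_false, iff_false,
              not_and]
            intro hx
            exact absurd hx List.not_mem_nil
          have hsub : {x | x ∈ (Walk.cons e h q').edges ∧ w ∈ G.inc x} ⊆ {e} := by
            intro x hx
            rcases hSsub hx with h1 | h1
            · exact h1
            · rw [hTempty2] at h1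
              exact absurd h1 (Set.notMem_empty x)
          have := Set.ncard_le_ncard hsub (Set.toFinite _)
          simp only [Set.ncard_singleton] at this
          omega
      · have h1 := Set.ncard_le_ncard (hSsub' hwe) (Set.toFinite _)
        have h2 := ihe hwb
        omega

lemma cycle_edge_count {v0 : V} (q : G.Walk v0 v0) (hq : q.IsCycle) (w : V) :
    {x | x ∈ q.edges ∧ w ∈ G.inc x}.ncard ≤ 2 := by
  cases q with
  | nil =>
    have : {x | x ∈ (Walk.nil (G := G) v0).edges ∧ w ∈ G.inc x} = ∅ := by
      ext x
      rw [Walk.edges]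
      simp
    rw [this]
    simp
  | @cons _ c _ e h q' =>
    have hnd : q'.support.Nodup := by
      have := hq.2.2
      rw [Walk.support] at this
      exact this
    obtain ⟨ih2, ihs, ihe⟩ := path_edge_count q' hnd w
    set T : Set E := {x | x ∈ q'.edges ∧ w ∈ G.inc x} with hT
    have hSsub : {x | x ∈ (Walk.cons e h q').edges ∧ w ∈ G.inc x} ⊆ insert e T := by
      rintro x ⟨hx, hwx⟩
      rw [Walk.edges] at hx
      rcases List.mem_cons.1 hx with rfl | hx
      · exact Set.mem_insert _ _
      · exact Set.mem_insert_of_mem _ ⟨hx, hwx⟩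
    by_cases hwe : w ∈ G.inc e
    · rw [h, Sym2.mem_iff] at hwe
      have hTle : T.ncard ≤ 1 := by
        rcases hwe with rfl | rfl
        · exact ihe rfl
        · exact ihs rfl
      have h1 := Set.ncard_le_ncard hSsub (Set.toFinite _)
      have h2 := Set.ncard_insert_le e T
      omega
    · have hSsub' : {x | x ∈ (Walk.cons e h q').edges ∧ w ∈ G.inc x} ⊆ T := by
        rintro x ⟨hx, hwx⟩
        rw [Walk.edges] at hx
        rcases List.mem_cons.1 hx with rfl | hx
        · exact absurd hwx hwe
        · exact ⟨hx, hwx⟩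
      have h1 := Set.ncard_le_ncard hSsub' (Set.toFinite _)
      omega

/-! ### The main theorem -/

theorem main_theorem (hΔ : 3 ≤ G.maxDeg)
    (ι : Type) (v : ι → V) (p : ∀ i : ι, G.Walk (v i) (v i))
    (hcyc : ∀ i : ι, (p i).IsCycle)
    (hdisj : ∀ i j : ι, i ≠ j → ∀ x : V, x ∈ (p i).support → x ∉ (p j).support) :
    ∃ S : Set E, G.IsMaxColorable S ∧ ∀ i : ι, ∀ f ∈ (p i).edges, f ∈ S := by
  classical
  set F : Set E := {f | ∃ i, f ∈ (p i).edges} with hF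
  have hFdeg : ∀ w : V, {f ∈ F | w ∈ G.inc f}.ncard ≤ 2 := by
    intro w
    by_cases hw : ∃ i x, x ∈ (p i).edges ∧ w ∈ G.inc x
    · obtain ⟨i₀, x₀, hx₀, hwx₀⟩ := hw
      have hsub : {f ∈ F | w ∈ G.inc f} ⊆ {x | x ∈ (p i₀).edges ∧ w ∈ G.inc x} := by
        rintro x ⟨⟨i, hxi⟩, hwx⟩
        refine ⟨?_, hwx⟩
        by_cases hii : i = i₀
        · exact hii ▸ hxi
        · exact absurd (mem_support_of_mem_edges (p i) x hxi w hwx)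
            (fun h1 => absurd (mem_support_of_mem_edges (p i₀) x₀ hx₀ w hwx₀)
              (hdisj i i₀ hii w h1))
      exact le_trans (Set.ncard_le_ncard hsub (Set.toFinite _))
        (cycle_edge_count (p i₀) (hcyc i₀) w)
    · push_neg at hw
      have : {f ∈ F | w ∈ G.inc f} = ∅ := by
        ext x
        simp only [Set.mem_setOf_eq, Set.mem_empty_iff_false, iff_false, not_and]
        rintro ⟨i, hxi⟩ hwx
        exact hw i x hxi hwx
      rw [this]
      simp
  have hdegA : ∀ w, G.degOn Set.univ w ≤ G.maxDeg := by
    intro w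
    exact Finset.le_sup (f := G.deg) (Finset.mem_univ w)
  obtain ⟨S, hlex, hFS⟩ := T_star (G := G) hΔ hdegA (Set.subset_univ F) hFdeg
  refine ⟨S, ⟨hlex.2.1, fun T hT => (hlex.2.2 T (Set.subset_univ T) hT).1⟩, ?_⟩
  intro i f hf
  exact hFS ⟨i, hf⟩


end Multigraph

end DisjointCyclesDev

/-- Theorem 4 of the paper. Let `G` be a loopless multigraph
with `Δ(G) ≥ 3` and let `(p i)_{i : ι}` be any family of pairwise
vertex-disjoint cycles of `G`.  Then there is a maximum
`Δ(G)`-edge-colorable subgraph (edge set `S`) of `G` containing all the edges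
of all these cycles. -/
theorem disjoint_cycles_extend_to_maxColorable
    {V E : Type} [Fintype V] [Fintype E] (G : Multigraph V E)
    (hΔ : 3 ≤ G.maxDeg)
    (ι : Type) (v : ι → V) (p : ∀ i : ι, G.Walk (v i) (v i))
    (hcyc : ∀ i : ι, (p i).IsCycle)
    (hdisj : ∀ i j : ι, i ≠ j → ∀ x : V, x ∈ (p i).support → x ∉ (p j).support) :
    ∃ S : Set E, G.IsMaxColorable S ∧ ∀ i : ι, ∀ f ∈ (p i).edges, f ∈ S := by
  exact Multigraph.main_theorem (G := G) hΔ ι v p hcyc hdisj
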